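/- arXiv:2107.01741 — 4 statements merged into one kernel-verified Lean document; each statement's English description precedes it below -/
import Mathlib

section
/- Let p ∈ [1, p_*) with p_* := N/(N−4β). The function t ↦ ‖Y(·,t)‖_{L^p(ℝ^N)} is integrable on (0,T) for some (equivalently every) T > 0 if and only if p < p_c := N/(N−2β). -/
/-!
Since `Y(·, t)` is `G` rescaled in space by `t ^ (-α / (2β))` and in amplitude by a power of `t`,
`‖Y(·, t)‖_p = t ^ e ‖G‖_p` with `e = α - 1 - αN / (2β) + αN / (2βp)`. The two-sided bounds on
`G` make `‖G‖_p` positive, and finite exactly because `(N - 4β) p < N < (N + 2β) p`. So the time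
integral is finite iff `t ^ e` is integrable at `0`, i.e. `e > -1`, which unwinds to `p < N / (N - 2β)`.
-/

open MeasureTheory Real Set Metric Module
open scoped ENNReal

lemma rpow_neg_le_two_rpow_mul_one_add_rpow_neg {x b : ℝ} (hx : 1 ≤ x) (hb : 0 ≤ b) :
    x ^ (-b) ≤ 2 ^ b * (1 + x) ^ (-b) := by
  have hx0 : 0 < x := by linarith
  calc x ^ (-b) = 2 ^ b * (2 * x) ^ (-b) := by
        rw [mul_rpow zero_le_two hx0.le, ← mul_assoc, ← rpow_add zero_lt_two]; simp
    _ ≤ 2 ^ b * (1 + x) ^ (-b) := by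
        gcongr ?_ * ?_
        exact rpow_le_rpow_of_nonpos (by positivity) (by linarith) (neg_nonpos.2 hb)

section HaarNormBounds

variable {E F : Type*} [NormedAddCommGroup E] [NormedSpace ℝ E] [FiniteDimensional ℝ E]
  [MeasurableSpace E] [BorelSpace E] [NormedAddCommGroup F]
  {μ : Measure E} [μ.IsAddHaarMeasure]

lemma integrableOn_compl_ball_of_norm_le_rpow {f : E → F} {C b : ℝ}
    (hb : finrank ℝ E < b) (h_decay : ∀ x, 1 ≤ ‖x‖ → ‖f x‖ ≤ C * ‖x‖ ^ (-b))
    (h_meas : AEStronglyMeasurable f μ) :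
    IntegrableOn f (ball 0 1)ᶜ μ := by
  have hb0 : 0 ≤ b := (Nat.cast_nonneg _).trans hb.le
  refine Integrable.mono' ((integrable_one_add_norm hb).const_mul (C * 2 ^ b)).integrableOn
    h_meas.restrict ((ae_restrict_iff' measurableSet_ball.compl).2 (.of_forall fun x hx => ?_))
  have hx : 1 ≤ ‖x‖ := by simpa using hx
  have hC : 0 ≤ C :=
    nonneg_of_mul_nonneg_left ((norm_nonneg _).trans (h_decay x hx)) (by positivity)
  calc ‖f x‖ ≤ C * ‖x‖ ^ (-b) := h_decay x hx
    _ ≤ C * (2 ^ b * (1 + ‖x‖) ^ (-b)) := by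
        gcongr; exact rpow_neg_le_two_rpow_mul_one_add_rpow_neg hx hb0
    _ = C * 2 ^ b * (1 + ‖x‖) ^ (-b) := by ring

lemma integrable_of_norm_le_rpow_of_norm_le_rpow {f : E → F} {C a b : ℝ}
    (hd : 1 ≤ finrank ℝ E) (ha : a < finrank ℝ E) (hb : finrank ℝ E < b)
    (h_sing : ∀ x ≠ 0, ‖x‖ < 1 → ‖f x‖ ≤ C * ‖x‖ ^ (-a))
    (h_decay : ∀ x, 1 ≤ ‖x‖ → ‖f x‖ ≤ C * ‖x‖ ^ (-b))
    (h_meas : AEStronglyMeasurable f μ) :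
    Integrable f μ := by
  have : Nontrivial E := Module.nontrivial_of_finrank_pos (R := ℝ) hd
  rw [← integrableOn_univ, ← union_compl_self (ball (0 : E) 1)]
  refine IntegrableOn.union (integrableOn_ball_of_norm_le_rpow (C := C) hd ha ?_ h_meas)
    (integrableOn_compl_ball_of_norm_le_rpow hb h_decay h_meas)
  filter_upwards [ae_restrict_of_ae (Measure.ae_ne μ 0), ae_restrict_mem measurableSet_ball]
    with x hx0 hx1
  exact h_sing x hx0 (mem_ball_zero_iff.1 hx1)

lemma memLp_of_norm_le_rpow_of_norm_le_rpow {f : E → F} {C a b p : ℝ}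
    (hd : 1 ≤ finrank ℝ E) (hp : 0 < p) (hC : 0 ≤ C)
    (ha : a * p < finrank ℝ E) (hb : finrank ℝ E < b * p)
    (h_sing : ∀ x ≠ 0, ‖x‖ < 1 → ‖f x‖ ≤ C * ‖x‖ ^ (-a))
    (h_decay : ∀ x, 1 ≤ ‖x‖ → ‖f x‖ ≤ C * ‖x‖ ^ (-b))
    (h_meas : AEStronglyMeasurable f μ) :
    MemLp f (ENNReal.ofReal p) μ := by
  have hp' : ENNReal.ofReal p ≠ 0 := by simpa using hp
  rw [← integrable_norm_rpow_iff h_meas hp' ENNReal.ofReal_ne_top, ENNReal.toReal_ofReal hp.le]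
  have h_pow {c : ℝ} {x : E} (hx : 0 < ‖x‖) (h : ‖f x‖ ≤ C * ‖x‖ ^ (-c)) :
      ‖‖f x‖ ^ p‖ ≤ C ^ p * ‖x‖ ^ (-(c * p)) := by
    rw [norm_of_nonneg (by positivity), neg_mul_eq_neg_mul, rpow_mul hx.le,
      ← mul_rpow hC (by positivity)]
    exact rpow_le_rpow (norm_nonneg _) h hp.le
  refine integrable_of_norm_le_rpow_of_norm_le_rpow (C := C ^ p) hd ha hb
    (fun x hx0 hx1 => h_pow (norm_pos_iff.2 hx0) (h_sing x hx0 hx1))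
    (fun x hx1 => h_pow (one_pos.trans_le hx1) (h_decay x hx1)) ?_
  exact (h_meas.norm.aemeasurable.pow_const p).aestronglyMeasurable

lemma eLpNorm_comp_smul_addHaar [NormedSpace ℝ F] (f : E → F) {s : ℝ} (hs : s ≠ 0)
    {p : ℝ≥0∞} (hp : p ≠ ∞) :
    eLpNorm (fun x => f (s • x)) p μ
      = ENNReal.ofReal (|s| ^ (-(finrank ℝ E / p.toReal))) * eLpNorm f p μ := by
  rw [show (fun x => f (s • x)) = f ∘ MeasurableEquiv.smul₀ s hs from rfl,
    ← (MeasurableEquiv.smul₀ s hs).measurableEmbedding.eLpNorm_map_measure,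
    MeasurableEquiv.coe_smul₀, Measure.map_addHaar_smul μ hs, eLpNorm_smul_measure_of_ne_top hp,
    smul_eq_mul, ENNReal.ofReal_rpow_of_nonneg (abs_nonneg _) (by positivity)]
  congr 2
  rw [abs_inv, abs_pow, ← rpow_natCast, ← rpow_neg (abs_nonneg s), ← rpow_mul (abs_nonneg s),
    one_div, ENNReal.toReal_inv]
  ring_nf

lemma eLpNorm_rpow_smul_comp_rpow_smul [NormedSpace ℝ F] (f : E → F) {t a c : ℝ} (ht : 0 < t)
    {p : ℝ≥0∞} (hp : p ≠ ∞) :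
    eLpNorm (fun x => t ^ a • f (t ^ (-c) • x)) p μ
      = ENNReal.ofReal (t ^ (a + c * finrank ℝ E / p.toReal)) * eLpNorm f p μ := by
  rw [show (fun x => t ^ a • f (t ^ (-c) • x)) = t ^ a • fun x => f (t ^ (-c) • x) from rfl,
    eLpNorm_const_smul, eLpNorm_comp_smul_addHaar f (rpow_pos_of_pos ht _).ne' hp, ← mul_assoc,
    Real.enorm_of_nonneg (rpow_nonneg ht.le _), ← ENNReal.ofReal_mul (rpow_nonneg ht.le _),
    abs_of_pos (rpow_pos_of_pos ht _), ← rpow_mul ht.le, ← rpow_add ht]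
  ring_nf

end HaarNormBounds

lemma eLpNorm_ne_zero_of_ne_zero_off_point {α F : Type*} [MeasurableSpace α] [NormedAddCommGroup F]
    {μ : Measure α} [NullSingletonClass μ] [NeZero μ] {f : α → F} {a : α} {p : ℝ≥0∞}
    (hp : p ≠ 0) (h_meas : AEStronglyMeasurable f μ) (hf : ∀ x ≠ a, f x ≠ 0) :
    eLpNorm f p μ ≠ 0 := by
  rw [Ne, eLpNorm_eq_zero_iff h_meas hp]
  intro h_zero
  have : ∀ᵐ x ∂μ, False := by
    filter_upwards [h_zero, Measure.ae_ne μ a] with x hx hxa using hf x hxa hx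
  exact NeZero.ne μ (ae_eq_bot.1 (by simpa using this))

lemma lintegral_Ioc_ofReal_rpow_lt_top_iff {T e : ℝ} (hT : 0 < T) :
    ∫⁻ t in Ioc 0 T, ENNReal.ofReal (t ^ e) < ∞ ↔ -1 < e := by
  rw [← hasFiniteIntegral_iff_ofReal, ← intervalIntegral.integrableOn_Ioo_rpow_iff hT,
    ← integrableOn_Ioc_iff_integrableOn_Ioo]
  · exact ⟨fun h => ⟨by fun_prop, h⟩, fun h => h.2⟩
  · exact (ae_restrict_iff' measurableSet_Ioc).2 (.of_forall fun t ht => rpow_nonneg ht.1.le e)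

lemma neg_one_lt_exponent_iff_lt_div {α β N p : ℝ} (hα : 0 < α) (hβ : 0 < β) (hp : 0 < p)
    (hN : 2 * β < N) :
    -1 < α - 1 - α * N / (2 * β) + α / (2 * β) * N / p ↔ p < N / (N - 2 * β) := by
  have h_shift : α - 1 - α * N / (2 * β) + α / (2 * β) * N / p - (-1)
      = α / (2 * β * p) * (N - (N - 2 * β) * p) := by
    field_simp; ring
  rw [← sub_pos, h_shift, mul_pos_iff_of_pos_left (by positivity), sub_pos,
    lt_div_iff₀ (sub_pos.2 hN), mul_comm]

theorem Y_Lp_time_integrability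
    (N : ℕ) (α β : ℝ)
    (hα : 0 < α ∧ α < 1) (hβ : 0 < β ∧ β ≤ 1) (hN : 4 * β < (N : ℝ))
    (G : EuclideanSpace ℝ (Fin N) → ℝ)
    (hGmeas : Measurable G) (hGnonneg : ∀ ξ, 0 ≤ G ξ)
    (c₁ c₂ : ℝ) (hc₁ : 0 < c₁) (hc₂ : 0 < c₂)
    (hGin : ∀ ξ : EuclideanSpace ℝ (Fin N), 0 < ‖ξ‖ → ‖ξ‖ ≤ 1 →
      c₁ * ‖ξ‖ ^ (4 * β - (N : ℝ)) ≤ G ξ ∧ G ξ ≤ c₂ * ‖ξ‖ ^ (4 * β - (N : ℝ)))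
    (hGout : ∀ ξ : EuclideanSpace ℝ (Fin N), 1 ≤ ‖ξ‖ →
      c₁ * ‖ξ‖ ^ (-((N : ℝ) + 2 * β)) ≤ G ξ ∧ G ξ ≤ c₂ * ‖ξ‖ ^ (-((N : ℝ) + 2 * β)))
    (Y : EuclideanSpace ℝ (Fin N) → ℝ → ℝ)
    (hY : ∀ x t, Y x t = t ^ (α - 1 - α * (N : ℝ) / (2 * β)) * G ((t ^ (-(α / (2 * β)))) • x))
    (p : ℝ) (hp1 : 1 ≤ p) (hpstar : p < (N : ℝ) / ((N : ℝ) - 4 * β)) :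
    ∀ T : ℝ, 0 < T →
      ((∫⁻ t in Set.Ioc (0:ℝ) T, eLpNorm (fun x => Y x t) (ENNReal.ofReal p) volume) < ∞ ↔
        p < (N : ℝ) / ((N : ℝ) - 2 * β)) := by
  intro T hT
  have hp : 0 < p := by linarith
  have hN0 : (0 : ℝ) < N := by linarith [hβ.1]
  have : NeZero N := ⟨by exact_mod_cast hN0.ne'⟩
  have hd : finrank ℝ (EuclideanSpace ℝ (Fin N)) = N := finrank_euclideanSpace_fin
  have hG_pos : ∀ ξ ≠ 0, 0 < G ξ := by
    intro ξ hξ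
    rcases le_total ‖ξ‖ 1 with h1 | h1
    · exact (mul_pos hc₁ (rpow_pos_of_pos (norm_pos_iff.2 hξ) _)).trans_le
        (hGin ξ (norm_pos_iff.2 hξ) h1).1
    · exact (mul_pos hc₁ (rpow_pos_of_pos (norm_pos_iff.2 hξ) _)).trans_le (hGout ξ h1).1
  have hK_top : eLpNorm G (ENNReal.ofReal p) volume ≠ ∞ := by
    refine (memLp_of_norm_le_rpow_of_norm_le_rpow (C := c₂) (a := N - 4 * β) (b := N + 2 * β)
      ?_ hp hc₂.le ?_ ?_ (fun ξ hξ hξ1 => ?_) (fun ξ hξ1 => ?_)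
      hGmeas.aestronglyMeasurable).eLpNorm_ne_top <;> simp only [hd, norm_of_nonneg (hGnonneg _)]
    · exact_mod_cast hN0
    · rw [lt_div_iff₀ (by linarith)] at hpstar; linarith
    · nlinarith
    · simpa only [neg_sub] using (hGin ξ (norm_pos_iff.2 hξ) hξ1.le).2
    · exact (hGout ξ hξ1).2
  have hK_zero : eLpNorm G (ENNReal.ofReal p) volume ≠ 0 :=
    eLpNorm_ne_zero_of_ne_zero_off_point (by simpa using hp) hGmeas.aestronglyMeasurable
      fun ξ hξ => (hG_pos ξ hξ).ne'
  have h_scaling : ∀ t ∈ Ioc 0 T, eLpNorm (fun x => Y x t) (ENNReal.ofReal p) volume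
      = ENNReal.ofReal (t ^ (α - 1 - α * N / (2 * β) + α / (2 * β) * N / p))
        * eLpNorm G (ENNReal.ofReal p) volume := by
    intro t ht
    rw [show (fun x => Y x t) = fun x => t ^ (α - 1 - α * N / (2 * β)) • G (t ^ (-(α / (2 * β))) • x)
      from funext fun x => hY x t, eLpNorm_rpow_smul_comp_rpow_smul G ht.1 ENNReal.ofReal_ne_top, hd,
      ENNReal.toReal_ofReal hp.le]
  rw [setLIntegral_congr_fun measurableSet_Ioc h_scaling, lintegral_mul_const' _ _ hK_top,
    ← neg_one_lt_exponent_iff_lt_div hα.1 hβ.1 hp (by linarith),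
    ← lintegral_Ioc_ofReal_rpow_lt_top_iff hT]
  simp [lt_top_iff_ne_top, ENNReal.mul_eq_top, hK_zero, hK_top]
end

section
/- Let a > 0 and γ ∈ ℝ. There exist constants 0 < c ≤ C such that for all t ≥ 2: if γ < 1 then c t^{a−γ} ≤ ∫₀ᵗ (t−s)^{a−1}(1+s)^{−γ} ds ≤ C t^{a−γ}; if γ = 1 then c t^{a−1} log t ≤ ∫₀ᵗ (t−s)^{a−1}(1+s)^{−1} ds ≤ C t^{a−1} log t; and if γ > 1 then c t^{a−1} ≤ ∫₀ᵗ (t−s)^{a−1}(1+s)^{−γ} ds ≤ C t^{a−1}. -/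
/-!
Split the integral at `s = t / 2`. On `[0, t/2]` the factor `(t - s)^(a-1)` stays within a
factor `2^|a-1|` of `t^(a-1)`, so this piece is comparable to
`t^(a-1) ∫₀^{t/2} (1 + s)^(-γ) ds`, which is of order `t^(a-γ)`, `t^(a-1) log t` or `t^(a-1)`
according as `γ < 1`, `γ = 1` or `γ > 1`. On `[t/2, t]` the factor `(1 + s)^(-γ)` stays within
a factor `2^|γ|` of `t^(-γ)`, so this piece is comparable to `t^(a-γ)`: it carries the lower
bound when `γ < 1` and is dominated by the first piece otherwise.
-/

open MeasureTheory Real Set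

lemma rpow_le_two_rpow_abs_mul {x y : ℝ} (e : ℝ) (hx : 0 < x) (hxy : x ≤ 2 * y)
    (hyx : y ≤ 2 * x) : y ^ e ≤ 2 ^ |e| * x ^ e := by
  have hy : 0 < y := by linarith
  rcases le_or_gt 0 e with he | he
  · calc y ^ e ≤ (2 * x) ^ e := rpow_le_rpow hy.le hyx he
      _ = 2 ^ |e| * x ^ e := by rw [abs_of_nonneg he, mul_rpow zero_le_two hx.le]
  · calc y ^ e ≤ (x / 2) ^ e := rpow_le_rpow_of_nonpos (by positivity) (by linarith) he.le
      _ = 2 ^ |e| * x ^ e := by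
        rw [abs_of_neg he, div_rpow hx.le zero_le_two, rpow_neg zero_le_two]; ring

lemma intervalIntegrable_sub_rpow (t : ℝ) {a : ℝ} (ha : 0 < a) (p q : ℝ) :
    IntervalIntegrable (fun s => (t - s) ^ (a - 1)) volume p q := by
  simpa using (intervalIntegral.intervalIntegrable_rpow' (a := t - p) (b := t - q)
    (r := a - 1) (by linarith)).comp_sub_left t

lemma integral_sub_rpow_from_half (t : ℝ) {a : ℝ} (ha : 0 < a) :
    ∫ s in t / 2..t, (t - s) ^ (a - 1) = (t / 2) ^ a / a := by
  rw [intervalIntegral.integral_comp_sub_left (fun u => u ^ (a - 1)) t,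
    integral_rpow (Or.inl (by linarith)), sub_self, sub_half, sub_add_cancel,
    zero_rpow ha.ne', sub_zero]

lemma integral_one_add_rpow_neg {γ x : ℝ} (hγ : γ ≠ 1) (hx : -1 < x) :
    ∫ s in 0..x, (1 + s) ^ (-γ) = ((1 + x) ^ (1 - γ) - 1) / (1 - γ) := by
  have hne : -γ ≠ -1 := fun h => hγ (neg_injective h)
  rw [intervalIntegral.integral_comp_add_left (fun u => u ^ (-γ)) 1,
    integral_rpow (Or.inr ⟨hne, notMem_uIcc_of_lt (by linarith) (by linarith)⟩), add_zero,
    one_rpow, neg_add_eq_sub]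

lemma integral_one_add_rpow_neg_le_of_lt_one {γ x : ℝ} (hγ : γ < 1) (hx : -1 < x) :
    ∫ s in 0..x, (1 + s) ^ (-γ) ≤ (1 + x) ^ (1 - γ) / (1 - γ) := by
  rw [integral_one_add_rpow_neg hγ.ne hx]
  exact div_le_div_of_nonneg_right (by linarith) (by linarith)

lemma integral_one_add_rpow_neg_of_one_lt {γ x : ℝ} (hγ : 1 < γ) (hx : -1 < x) :
    ∫ s in 0..x, (1 + s) ^ (-γ) = (1 - (1 + x) ^ (1 - γ)) / (γ - 1) := by
  rw [integral_one_add_rpow_neg hγ.ne' hx, ← neg_div_neg_eq, neg_sub, neg_sub]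

lemma integral_one_add_rpow_neg_le_of_one_lt {γ x : ℝ} (hγ : 1 < γ) (hx : -1 < x) :
    ∫ s in 0..x, (1 + s) ^ (-γ) ≤ 1 / (γ - 1) := by
  rw [integral_one_add_rpow_neg_of_one_lt hγ hx]
  have := rpow_nonneg (by linarith : 0 ≤ 1 + x) (1 - γ)
  exact div_le_div_of_nonneg_right (by linarith) (by linarith)

lemma le_integral_one_add_rpow_neg_of_one_lt {γ x : ℝ} (hγ : 1 < γ) (hx : 1 ≤ x) :
    (1 - 2 ^ (1 - γ)) / (γ - 1) ≤ ∫ s in 0..x, (1 + s) ^ (-γ) := by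
  rw [integral_one_add_rpow_neg_of_one_lt hγ (by linarith)]
  have : (1 + x) ^ (1 - γ) ≤ 2 ^ (1 - γ) :=
    rpow_le_rpow_of_nonpos two_pos (by linarith) (by linarith)
  exact div_le_div_of_nonneg_right (by linarith) (by linarith)

lemma integral_one_add_rpow_neg_one {x : ℝ} (hx : -1 < x) :
    ∫ s in 0..x, (1 + s) ^ (-1 : ℝ) = log (1 + x) := by
  simp_rw [rpow_neg_one]
  rw [intervalIntegral.integral_comp_add_left (fun u => u⁻¹) 1,
    integral_inv (notMem_uIcc_of_lt (by linarith) (by linarith)), add_zero, div_one]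

lemma continuousOn_one_add_rpow (r : ℝ) {p q : ℝ} (hp : -1 < p) (hq : -1 < q) :
    ContinuousOn (fun s => (1 + s) ^ r) (uIcc p q) := by
  refine (continuous_const.add continuous_id).continuousOn.rpow_const fun s hs => Or.inl ?_
  rcases mem_uIcc.1 hs with h | h <;> exact (by linarith [h.1] : (0 : ℝ) < 1 + s).ne'

noncomputable def convKernel (a γ t s : ℝ) : ℝ := (t - s) ^ (a - 1) * (1 + s) ^ (-γ)

noncomputable def convIntegral (a γ t : ℝ) : ℝ := ∫ s in Ioo 0 t, convKernel a γ t s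

section Kernel

variable {a : ℝ} (γ : ℝ) {t : ℝ}

lemma intervalIntegrable_convKernel (ha : 0 < a) {p q : ℝ} (hp : -1 < p) (hq : -1 < q) :
    IntervalIntegrable (convKernel a γ t) volume p q :=
  (intervalIntegrable_sub_rpow t ha p q).mul_continuousOn (continuousOn_one_add_rpow _ hp hq)

lemma convKernel_nonneg {s : ℝ} (hs : s ∈ Icc (-1) t) : 0 ≤ convKernel a γ t s :=
  mul_nonneg (rpow_nonneg (by linarith [hs.2]) _) (rpow_nonneg (by linarith [hs.1]) _)

lemma integral_convKernel_nonneg {p q : ℝ} (hpq : p ≤ q) (hp : -1 ≤ p) (hq : q ≤ t) :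
    0 ≤ ∫ s in p..q, convKernel a γ t s :=
  intervalIntegral.integral_nonneg hpq fun _ hs =>
    convKernel_nonneg γ ⟨hp.trans hs.1, hs.2.trans hq⟩

lemma convIntegral_eq_add (ha : 0 < a) (ht : 0 ≤ t) :
    convIntegral a γ t =
      (∫ s in 0..t / 2, convKernel a γ t s) + ∫ s in t / 2..t, convKernel a γ t s := by
  rw [convIntegral, ← integral_Ioc_eq_integral_Ioo, ← intervalIntegral.integral_of_le ht,
    intervalIntegral.integral_add_adjacent_intervals
      (intervalIntegrable_convKernel γ ha (by norm_num) (by linarith))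
      (intervalIntegrable_convKernel γ ha (by linarith) (by linarith))]

lemma integral_convKernel_to_half_le (ha : 0 < a) (ht : 0 < t) :
    ∫ s in 0..t / 2, convKernel a γ t s ≤
      2 ^ |a - 1| * t ^ (a - 1) * ∫ s in 0..t / 2, (1 + s) ^ (-γ) := by
  rw [← intervalIntegral.integral_const_mul]
  refine intervalIntegral.integral_mono_on (by linarith)
    (intervalIntegrable_convKernel γ ha (by norm_num) (by linarith))
    ((continuousOn_one_add_rpow _ (by norm_num) (by linarith)).intervalIntegrable.const_mul _)
    fun s hs => mul_le_mul_of_nonneg_right ?_ (rpow_nonneg (by linarith [hs.1]) _)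
  exact rpow_le_two_rpow_abs_mul _ ht (by linarith [hs.2]) (by linarith [hs.1])

lemma le_integral_convKernel_to_half (ha : 0 < a) (ht : 0 < t) :
    t ^ (a - 1) * ∫ s in 0..t / 2, (1 + s) ^ (-γ) ≤
      2 ^ |a - 1| * ∫ s in 0..t / 2, convKernel a γ t s := by
  rw [← intervalIntegral.integral_const_mul, ← intervalIntegral.integral_const_mul]
  refine intervalIntegral.integral_mono_on (by linarith)
    ((continuousOn_one_add_rpow _ (by norm_num) (by linarith)).intervalIntegrable.const_mul _)
    ((intervalIntegrable_convKernel γ ha (by norm_num) (by linarith)).const_mul _)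
    fun s hs => ?_
  rw [convKernel, ← mul_assoc]
  exact mul_le_mul_of_nonneg_right
    (rpow_le_two_rpow_abs_mul _ (by linarith [hs.2]) (by linarith [hs.1]) (by linarith [hs.2]))
    (rpow_nonneg (by linarith [hs.1]) _)

lemma half_rpow_div_mul_rpow_neg (ha : 0 < a) (ht : 0 < t) :
    (t / 2) ^ a / a * t ^ (-γ) = t ^ (a - γ) / (2 ^ a * a) := by
  rw [div_rpow ht.le zero_le_two, sub_eq_add_neg, rpow_add ht]
  field_simp

lemma integral_convKernel_from_half_le (ha : 0 < a) (ht : 1 ≤ t) :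
    ∫ s in t / 2..t, convKernel a γ t s ≤ 2 ^ |γ| * (t ^ (a - γ) / (2 ^ a * a)) := by
  rw [← half_rpow_div_mul_rpow_neg γ ha (by linarith), ← integral_sub_rpow_from_half t ha,
    ← intervalIntegral.integral_mul_const, ← intervalIntegral.integral_const_mul]
  refine intervalIntegral.integral_mono_on (by linarith)
    (intervalIntegrable_convKernel γ ha (by linarith) (by linarith))
    (((intervalIntegrable_sub_rpow t ha _ _).mul_const _).const_mul _) fun s hs => ?_
  rw [convKernel, mul_left_comm]
  refine mul_le_mul_of_nonneg_left ?_ (rpow_nonneg (by linarith [hs.2]) _)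
  simpa only [abs_neg] using
    rpow_le_two_rpow_abs_mul (-γ) (by linarith) (by linarith [hs.1]) (by linarith [hs.2])

lemma le_integral_convKernel_from_half (ha : 0 < a) (ht : 1 ≤ t) :
    t ^ (a - γ) / (2 ^ a * a) ≤ 2 ^ |γ| * ∫ s in t / 2..t, convKernel a γ t s := by
  rw [← half_rpow_div_mul_rpow_neg γ ha (by linarith), ← integral_sub_rpow_from_half t ha,
    ← intervalIntegral.integral_mul_const, ← intervalIntegral.integral_const_mul]
  refine intervalIntegral.integral_mono_on (by linarith)
    ((intervalIntegrable_sub_rpow t ha _ _).mul_const _)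
    ((intervalIntegrable_convKernel γ ha (by linarith) (by linarith)).const_mul _) fun s hs => ?_
  rw [convKernel, mul_left_comm]
  refine mul_le_mul_of_nonneg_left ?_ (rpow_nonneg (by linarith [hs.2]) _)
  simpa only [abs_neg] using
    rpow_le_two_rpow_abs_mul (-γ) (by linarith [hs.1]) (by linarith [hs.2]) (by linarith [hs.1])

end Kernel

theorem exists_convIntegral_bounds_of_lt_one {a γ : ℝ} (ha : 0 < a) (hγ : γ < 1) :
    ∃ c C : ℝ, 0 < c ∧ c ≤ C ∧ ∀ t : ℝ, 2 ≤ t →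
      c * t ^ (a - γ) ≤ convIntegral a γ t ∧
      convIntegral a γ t ≤ C * t ^ (a - γ) := by
  set c : ℝ := (2 ^ |γ|)⁻¹ / (2 ^ a * a)
  set C : ℝ := 2 ^ |a - 1| / (1 - γ) + 2 ^ |γ| / (2 ^ a * a)
  have hlow : ∀ t : ℝ, 2 ≤ t → c * t ^ (a - γ) ≤ convIntegral a γ t := by
    intro t ht
    have hnear := le_integral_convKernel_from_half γ ha (by linarith : (1 : ℝ) ≤ t)
    have hfar := integral_convKernel_nonneg (a := a) (t := t) γ (p := 0) (q := t / 2)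
      (by linarith) (by norm_num) (by linarith)
    rw [convIntegral_eq_add γ ha (by linarith)]
    calc c * t ^ (a - γ) = (2 ^ |γ|)⁻¹ * (t ^ (a - γ) / (2 ^ a * a)) := by ring
      _ ≤ ∫ s in t / 2..t, convKernel a γ t s := (inv_mul_le_iff₀ (by positivity)).2 hnear
      _ ≤ _ := by linarith
  have hup : ∀ t : ℝ, 2 ≤ t → convIntegral a γ t ≤ C * t ^ (a - γ) := by
    intro t ht
    have ht0 : 0 < t := by linarith
    have hJ : ∫ s in 0..t / 2, (1 + s) ^ (-γ) ≤ t ^ (1 - γ) / (1 - γ) :=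
      (integral_one_add_rpow_neg_le_of_lt_one hγ (by linarith)).trans <|
        div_le_div_of_nonneg_right (rpow_le_rpow (by linarith) (by linarith) (by linarith))
          (by linarith)
    have hfar := (integral_convKernel_to_half_le γ ha ht0).trans
      (mul_le_mul_of_nonneg_left hJ (by positivity))
    have hnear := integral_convKernel_from_half_le γ ha (by linarith : (1 : ℝ) ≤ t)
    have hsplit : t ^ (a - γ) = t ^ (a - 1) * t ^ (1 - γ) := by rw [← rpow_add ht0]; ring_nf
    rw [convIntegral_eq_add γ ha ht0.le]
    calc _ ≤ 2 ^ |a - 1| * t ^ (a - 1) * (t ^ (1 - γ) / (1 - γ)) +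
          2 ^ |γ| * (t ^ (a - γ) / (2 ^ a * a)) := add_le_add hfar hnear
      _ = C * t ^ (a - γ) := by rw [hsplit]; ring
  exact ⟨c, C, by positivity,
    le_of_mul_le_mul_right ((hlow 2 le_rfl).trans (hup 2 le_rfl)) (by positivity),
    fun t ht => ⟨hlow t ht, hup t ht⟩⟩

theorem exists_convIntegral_bounds_of_one_lt {a γ : ℝ} (ha : 0 < a) (hγ : 1 < γ) :
    ∃ c C : ℝ, 0 < c ∧ c ≤ C ∧ ∀ t : ℝ, 2 ≤ t →
      c * t ^ (a - 1) ≤ convIntegral a γ t ∧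
      convIntegral a γ t ≤ C * t ^ (a - 1) := by
  have hκ : 0 < 1 - (2 : ℝ) ^ (1 - γ) :=
    sub_pos.2 (rpow_lt_one_of_one_lt_of_neg one_lt_two (by linarith))
  set c : ℝ := (2 ^ |a - 1|)⁻¹ * ((1 - 2 ^ (1 - γ)) / (γ - 1))
  set C : ℝ := 2 ^ |a - 1| / (γ - 1) + 2 ^ |γ| / (2 ^ a * a)
  have hlow : ∀ t : ℝ, 2 ≤ t → c * t ^ (a - 1) ≤ convIntegral a γ t := by
    intro t ht
    have hfar := le_integral_convKernel_to_half γ ha (by linarith : (0 : ℝ) < t)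
    have hnear := integral_convKernel_nonneg (a := a) (t := t) γ (p := t / 2) (q := t)
      (by linarith) (by linarith) le_rfl
    rw [convIntegral_eq_add γ ha (by linarith)]
    calc c * t ^ (a - 1) = (2 ^ |a - 1|)⁻¹ * (t ^ (a - 1) * ((1 - 2 ^ (1 - γ)) / (γ - 1))) :=
          by ring
      _ ≤ (2 ^ |a - 1|)⁻¹ * (t ^ (a - 1) * ∫ s in 0..t / 2, (1 + s) ^ (-γ)) := by
          gcongr; exact le_integral_one_add_rpow_neg_of_one_lt hγ (by linarith)
      _ ≤ ∫ s in 0..t / 2, convKernel a γ t s := (inv_mul_le_iff₀ (by positivity)).2 hfar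
      _ ≤ _ := by linarith
  have hup : ∀ t : ℝ, 2 ≤ t → convIntegral a γ t ≤ C * t ^ (a - 1) := by
    intro t ht
    have ht0 : 0 < t := by linarith
    have hfar := (integral_convKernel_to_half_le γ ha ht0).trans
      (mul_le_mul_of_nonneg_left (integral_one_add_rpow_neg_le_of_one_lt hγ (by linarith))
        (by positivity))
    have hnear := integral_convKernel_from_half_le γ ha (by linarith : (1 : ℝ) ≤ t)
    have hdecay : t ^ (a - γ) ≤ t ^ (a - 1) :=
      rpow_le_rpow_of_exponent_le (by linarith) (by linarith)
    rw [convIntegral_eq_add γ ha ht0.le]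
    calc _ ≤ 2 ^ |a - 1| * t ^ (a - 1) * (1 / (γ - 1)) +
          2 ^ |γ| * (t ^ (a - 1) / (2 ^ a * a)) := by
          refine add_le_add hfar (hnear.trans ?_)
          gcongr
      _ = C * t ^ (a - 1) := by ring
  exact ⟨c, C, by positivity,
    le_of_mul_le_mul_right ((hlow 2 le_rfl).trans (hup 2 le_rfl)) (by positivity),
    fun t ht => ⟨hlow t ht, hup t ht⟩⟩

theorem exists_convIntegral_bounds_of_eq_one {a : ℝ} (ha : 0 < a) :
    ∃ c C : ℝ, 0 < c ∧ c ≤ C ∧ ∀ t : ℝ, 2 ≤ t →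
      c * t ^ (a - 1) * log t ≤ convIntegral a 1 t ∧
      convIntegral a 1 t ≤ C * t ^ (a - 1) * log t := by
  set c : ℝ := (2 ^ |a - 1|)⁻¹ / 2
  set C : ℝ := 2 ^ |a - 1| + 2 / (2 ^ a * a * log 2)
  have hlow : ∀ t : ℝ, 2 ≤ t → c * t ^ (a - 1) * log t ≤ convIntegral a 1 t := by
    intro t ht
    have ht0 : 0 < t := by linarith
    have hfar := le_integral_convKernel_to_half 1 ha ht0
    have hnear := integral_convKernel_nonneg (a := a) (t := t) 1 (p := t / 2) (q := t)
      (by linarith) (by linarith) le_rfl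
    have hlog : log t ≤ 2 * log (1 + t / 2) := by
      calc log t ≤ log ((1 + t / 2) ^ 2) := log_le_log ht0 (by nlinarith)
        _ = 2 * log (1 + t / 2) := by rw [log_pow]; norm_num
    rw [integral_one_add_rpow_neg_one (by linarith)] at hfar
    rw [convIntegral_eq_add 1 ha ht0.le]
    calc c * t ^ (a - 1) * log t = (2 ^ |a - 1|)⁻¹ * (t ^ (a - 1) * (log t / 2)) := by ring
      _ ≤ (2 ^ |a - 1|)⁻¹ * (t ^ (a - 1) * log (1 + t / 2)) := by gcongr; linarith
      _ ≤ ∫ s in 0..t / 2, convKernel a 1 t s := (inv_mul_le_iff₀ (by positivity)).2 hfar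
      _ ≤ _ := by linarith
  have hup : ∀ t : ℝ, 2 ≤ t → convIntegral a 1 t ≤ C * t ^ (a - 1) * log t := by
    intro t ht
    have ht0 : 0 < t := by linarith
    have hfar := integral_convKernel_to_half_le 1 ha ht0
    have hnear := integral_convKernel_from_half_le 1 ha (by linarith : (1 : ℝ) ≤ t)
    have hlog : log (1 + t / 2) ≤ log t := log_le_log (by linarith) (by linarith)
    have hlog2 : 1 ≤ log t / log 2 :=
      (one_le_div (log_pos one_lt_two)).2 (log_le_log two_pos ht)
    rw [integral_one_add_rpow_neg_one (by linarith)] at hfar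
    rw [abs_one, rpow_one] at hnear
    rw [convIntegral_eq_add 1 ha ht0.le]
    calc _ ≤ 2 ^ |a - 1| * t ^ (a - 1) * log t + 2 * (t ^ (a - 1) / (2 ^ a * a)) * 1 := by
          refine add_le_add (hfar.trans ?_) (by linarith)
          gcongr
      _ ≤ 2 ^ |a - 1| * t ^ (a - 1) * log t +
          2 * (t ^ (a - 1) / (2 ^ a * a)) * (log t / log 2) := by gcongr
      _ = C * t ^ (a - 1) * log t := by simp only [C]; field_simp
  have h2 : 0 < (2 : ℝ) ^ (a - 1) * log 2 := by positivity
  refine ⟨c, C, by positivity, le_of_mul_le_mul_right ?_ h2,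
    fun t ht => ⟨hlow t ht, hup t ht⟩⟩
  simpa only [mul_assoc] using (hlow 2 le_rfl).trans (hup 2 le_rfl)

theorem convolution_time_integral_asymptotics (a γ : ℝ) (ha : 0 < a) :
    ∃ c C : ℝ, 0 < c ∧ c ≤ C ∧ ∀ t : ℝ, 2 ≤ t →
      (γ < 1 →
        c * t ^ (a - γ) ≤ (∫ s in Set.Ioo (0:ℝ) t, (t - s) ^ (a - 1) * (1 + s) ^ (-γ)) ∧
        (∫ s in Set.Ioo (0:ℝ) t, (t - s) ^ (a - 1) * (1 + s) ^ (-γ)) ≤ C * t ^ (a - γ)) ∧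
      (γ = 1 →
        c * t ^ (a - 1) * Real.log t ≤
            (∫ s in Set.Ioo (0:ℝ) t, (t - s) ^ (a - 1) * (1 + s) ^ (-(1:ℝ))) ∧
        (∫ s in Set.Ioo (0:ℝ) t, (t - s) ^ (a - 1) * (1 + s) ^ (-(1:ℝ))) ≤
            C * t ^ (a - 1) * Real.log t) ∧
      (1 < γ →
        c * t ^ (a - 1) ≤ (∫ s in Set.Ioo (0:ℝ) t, (t - s) ^ (a - 1) * (1 + s) ^ (-γ)) ∧
        (∫ s in Set.Ioo (0:ℝ) t, (t - s) ^ (a - 1) * (1 + s) ^ (-γ)) ≤ C * t ^ (a - 1)) := by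
  rcases lt_trichotomy γ 1 with hγ | rfl | hγ
  · obtain ⟨c, C, hc, hcC, h⟩ := exists_convIntegral_bounds_of_lt_one ha hγ
    exact ⟨c, C, hc, hcC, fun t ht =>
      ⟨fun _ => h t ht, fun h1 => absurd h1 hγ.ne, fun h1 => absurd hγ h1.not_gt⟩⟩
  · obtain ⟨c, C, hc, hcC, h⟩ := exists_convIntegral_bounds_of_eq_one ha
    exact ⟨c, C, hc, hcC, fun t ht =>
      ⟨fun h1 => absurd h1 (lt_irrefl 1), fun _ => h t ht, fun h1 => absurd h1 (lt_irrefl 1)⟩⟩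
  · obtain ⟨c, C, hc, hcC, h⟩ := exists_convIntegral_bounds_of_one_lt ha hγ
    exact ⟨c, C, hc, hcC, fun t ht =>
      ⟨fun h1 => absurd hγ h1.not_gt, fun h1 => absurd h1 hγ.ne', fun _ => h t ht⟩⟩
end

section
/- Let p ∈ [1, ∞], γ ∈ ℝ, ν > 0, and let f(x,t) := (1+t)^{−γ} χ_{B₁}(x), where B₁ is the unit ball of ℝ^N. Then there exist c > 0 and t₀ ≥ 2 such that the mild solution u satisfies, for all t ≥ t₀, ‖u(·,t)‖_{L^p({|x| ≥ ν t^{α/(2β)}})} ≥ c t^{α−1−(αN/(2β))(1−1/p)} ∫₀^{t/2} (1+s)^{−γ} ds. In particular the exterior-region upper bounds (t^{−γ+α−(αN/(2β))(1−1/p)} for γ < 1, t^{−1+α−(αN/(2β))(1−1/p)} log t for γ = 1, t^{−1+α−(αN/(2β))(1−1/p)} for γ > 1) are sharp. -/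
/-!
The mild solution superposes translates of a nonnegative kernel. For `ν t^κ ≤ |x| ≤ (ν+1) t^κ`
(`κ = α/(2β)`), `|y| < 1` and `s ≤ t/2`, the rescaled point `ξ = (t-s)^{-κ} (x-y)` ranges in a
fixed bounded set away from `0`, where `G` is bounded below, while
`(t-s)^{α-1-αN/(2β)} ≥ t^{α-1-αN/(2β)}`. Hence `u(·,t) ≳ t^{α-1-αN/(2β)} ∫₀^{t/2} (1+s)^{-γ} ds`
on that shell, whose measure is `≍ t^{κN}`. The upper bound on `G` is only needed to make the
Duhamel integral converge: on the support of the forcing the kernel is `O((t-s)^{2α-1})`.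
-/

open MeasureTheory Real Set Filter Metric Module
open scoped ENNReal Pointwise

noncomputable def nonlocalHeatKernel {E : Type*} [NormedAddCommGroup E] [NormedSpace ℝ E]
    (α β n : ℝ) (G : E → ℝ) (x : E) (t : ℝ) : ℝ :=
  t ^ (α - 1 - α * n / (2 * β)) * G (t ^ (-(α / (2 * β))) • x)

section Profile

variable {E : Type*} [NormedAddCommGroup E] {G : E → ℝ}

theorem profile_le_of_pos {c e₁ e₂ : ℝ} (hc : 0 ≤ c) (he : e₂ ≤ e₁)
    (hin : ∀ ξ : E, 0 < ‖ξ‖ → ‖ξ‖ ≤ 1 → G ξ ≤ c * ‖ξ‖ ^ e₁)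
    (hout : ∀ ξ : E, 1 ≤ ‖ξ‖ → G ξ ≤ c * ‖ξ‖ ^ e₂) {ξ : E} (hξ : 0 < ‖ξ‖) :
    G ξ ≤ c * ‖ξ‖ ^ e₂ := by
  rcases le_total ‖ξ‖ 1 with hξ1 | hξ1
  · exact (hin ξ hξ hξ1).trans
      (mul_le_mul_of_nonneg_left (rpow_le_rpow_of_exponent_ge hξ hξ1 he) hc)
  · exact hout ξ hξ1

theorem exists_pos_le_profile {c e₁ e₂ : ℝ} (hc : 0 < c) (he₁ : e₁ ≤ 0) (he₂ : e₂ ≤ 0)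
    (hin : ∀ ξ : E, 0 < ‖ξ‖ → ‖ξ‖ ≤ 1 → c * ‖ξ‖ ^ e₁ ≤ G ξ)
    (hout : ∀ ξ : E, 1 ≤ ‖ξ‖ → c * ‖ξ‖ ^ e₂ ≤ G ξ) (R : ℝ) :
    ∃ g > 0, ∀ ξ : E, 0 < ‖ξ‖ → ‖ξ‖ ≤ R → g ≤ G ξ := by
  have hR : 1 ≤ max 1 R := le_max_left _ _
  refine ⟨c * max 1 R ^ e₂, mul_pos hc (rpow_pos_of_pos (by linarith) _), fun ξ hξ hξR => ?_⟩
  rcases le_total ‖ξ‖ 1 with hξ1 | hξ1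
  · calc c * max 1 R ^ e₂ ≤ c * ‖ξ‖ ^ e₁ := mul_le_mul_of_nonneg_left
          ((rpow_le_one_of_one_le_of_nonpos hR he₂).trans
            (one_le_rpow_of_pos_of_le_one_of_nonpos hξ hξ1 he₁)) hc.le
      _ ≤ G ξ := hin ξ hξ hξ1
  · exact (mul_le_mul_of_nonneg_left (rpow_le_rpow_of_nonpos hξ (hξR.trans (le_max_right _ _))
      he₂) hc.le).trans (hout ξ hξ1)

end Profile

namespace nonlocalHeatKernel

variable {E : Type*} [NormedAddCommGroup E] [NormedSpace ℝ E] {α β n : ℝ} {G : E → ℝ}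

theorem nonneg (hG : ∀ ξ, 0 ≤ G ξ) (x : E) {t : ℝ} (ht : 0 ≤ t) :
    0 ≤ nonlocalHeatKernel α β n G x t :=
  mul_nonneg (rpow_nonneg ht _) (hG _)

theorem le_rpow_mul (hβ : 0 < β) {c : ℝ}
    (hG : ∀ ξ : E, 0 < ‖ξ‖ → G ξ ≤ c * ‖ξ‖ ^ (-(n + 2 * β))) {t : ℝ} (ht : 0 < t) {x : E}
    (hx : x ≠ 0) :
    nonlocalHeatKernel α β n G x t ≤ c * t ^ (2 * α - 1) * ‖x‖ ^ (-(n + 2 * β)) := by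
  set κ := α / (2 * β)
  have hscale := norm_smul_of_nonneg (rpow_nonneg ht.le (-κ)) x
  have hξ : 0 < ‖t ^ (-κ) • x‖ := by rw [hscale]; positivity
  have hexp : α - 1 - α * n / (2 * β) + -κ * -(n + 2 * β) = 2 * α - 1 := by
    simp only [κ]; field_simp; ring
  calc nonlocalHeatKernel α β n G x t
      ≤ t ^ (α - 1 - α * n / (2 * β)) * (c * ‖t ^ (-κ) • x‖ ^ (-(n + 2 * β))) :=
        mul_le_mul_of_nonneg_left (hG _ hξ) (rpow_nonneg ht.le _)
    _ = c * t ^ (2 * α - 1) * ‖x‖ ^ (-(n + 2 * β)) := by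
        rw [hscale, mul_rpow (rpow_nonneg ht.le _) (norm_nonneg x), ← rpow_mul ht.le, ← hexp,
          rpow_add ht]
        ring

theorem le_of_norm_le {g R : ℝ} (hG : ∀ ξ : E, 0 < ‖ξ‖ → ‖ξ‖ ≤ R → g ≤ G ξ) {t : ℝ}
    (ht : 0 < t) {x : E} (hx : x ≠ 0) (hxR : ‖x‖ ≤ R * t ^ (α / (2 * β))) :
    g * t ^ (α - 1 - α * n / (2 * β)) ≤ nonlocalHeatKernel α β n G x t := by
  set κ := α / (2 * β)
  have hscale := norm_smul_of_nonneg (rpow_nonneg ht.le (-κ)) x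
  have hξR : ‖t ^ (-κ) • x‖ ≤ R := by
    rw [hscale, rpow_neg ht.le, inv_mul_le_iff₀ (rpow_pos_of_pos ht _), mul_comm]
    exact hxR
  have hξ : 0 < ‖t ^ (-κ) • x‖ := by rw [hscale]; positivity
  exact (mul_le_mul_of_nonneg_right (hG _ hξ hξR) (rpow_nonneg ht.le _)).trans_eq (mul_comm _ _)

theorem measurable_uncurry [MeasurableSpace E] [BorelSpace E] [SecondCountableTopology E]
    (hG : Measurable G) : Measurable (Function.uncurry (nonlocalHeatKernel α β n G)) := by
  unfold nonlocalHeatKernel Function.uncurry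
  fun_prop

end nonlocalHeatKernel

section TimeIntegral

variable {w K : ℝ → ℝ} {t : ℝ}

theorem integrableOn_Ioc_of_norm_le_rpow {C r : ℝ} (hr : -1 < r)
    (hK : AEStronglyMeasurable K (volume.restrict (Ioc 0 t)))
    (hKle : ∀ τ ∈ Ioc 0 t, ‖K τ‖ ≤ C * τ ^ r) : IntegrableOn K (Ioc 0 t) := by
  rcases le_total t 0 with ht | ht
  · simp [Ioc_eq_empty_of_le ht]
  have hrpow : IntegrableOn (fun τ : ℝ => C * τ ^ r) (Ioc 0 t) :=
    ((intervalIntegrable_iff_integrableOn_Ioc_of_le ht).1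
      (intervalIntegral.intervalIntegrable_rpow' hr)).const_mul C
  exact hrpow.mono' hK ((ae_restrict_iff' measurableSet_Ioc).2 (.of_forall hKle))

theorem integrableOn_Ioc_mul_comp_sub (ht : 0 ≤ t) (hw : ContinuousOn w (Icc 0 t))
    (hK : IntegrableOn K (Ioc 0 t)) : IntegrableOn (fun s => w s * K (t - s)) (Ioc 0 t) := by
  have hK' : IntervalIntegrable (fun s => K (t - s)) volume 0 t := by
    simpa using (((intervalIntegrable_iff_integrableOn_Ioc_of_le ht).2 hK).comp_sub_left t).symm
  exact (intervalIntegrable_iff_integrableOn_Ioc_of_le ht).1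
    (hK'.continuousOn_mul (by rwa [uIcc_of_le ht]))

theorem mul_setIntegral_le_setIntegral_mul_comp_sub {k : ℝ} (ht : 0 ≤ t)
    (hw : ContinuousOn w (Icc 0 t)) (hw0 : ∀ s ∈ Icc 0 t, 0 ≤ w s)
    (hK : IntegrableOn K (Ioc 0 t)) (hK0 : ∀ τ ∈ Icc 0 t, 0 ≤ K τ)
    (hk : ∀ τ ∈ Ico (t / 2) t, k ≤ K τ) :
    k * ∫ s in Ioc 0 (t / 2), w s ≤ ∫ s in Ioc 0 t, w s * K (t - s) := by
  have hsub : Ioc 0 (t / 2) ⊆ Ioc 0 t := Ioc_subset_Ioc_right (by linarith)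
  have hwK := integrableOn_Ioc_mul_comp_sub ht hw hK
  have hw' : IntegrableOn w (Ioc 0 (t / 2)) :=
    ((hw.mono (Icc_subset_Icc_right (by linarith))).integrableOn_Icc).mono_set Ioc_subset_Icc_self
  rw [← integral_const_mul]
  calc ∫ s in Ioc 0 (t / 2), k * w s ≤ ∫ s in Ioc 0 (t / 2), w s * K (t - s) := by
        refine setIntegral_mono_on (hw'.const_mul k) (hwK.mono_set hsub) measurableSet_Ioc ?_
        intro s ⟨hs0, hs⟩
        rw [mul_comm]
        exact mul_le_mul_of_nonneg_left (hk _ ⟨by linarith, by linarith⟩)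
          (hw0 s ⟨hs0.le, by linarith⟩)
    _ ≤ ∫ s in Ioc 0 t, w s * K (t - s) := by
        refine setIntegral_mono_set hwK ?_ hsub.eventuallyLE
        refine (ae_restrict_iff' measurableSet_Ioc).2 (.of_forall fun s ⟨hs0, hst⟩ => ?_)
        exact mul_nonneg (hw0 s ⟨hs0.le, hst⟩) (hK0 _ ⟨by linarith, by linarith⟩)

end TimeIntegral

section SpaceTime

variable {E : Type*} [MeasurableSpace E] {μ : Measure E} {h : E → ℝ → ℝ} {B : Set E}

theorem integral_mul_const_mul_indicator_one (c : ℝ) (hB : MeasurableSet B) (k : E → ℝ) :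
    ∫ y, k y * (c * B.indicator (fun _ => (1 : ℝ)) y) ∂μ = c * ∫ y in B, k y ∂μ := by
  rw [← integral_indicator hB, ← integral_const_mul]
  congr 1 with y
  by_cases hy : y ∈ B <;> simp [hy, mul_comm]

theorem mul_setIntegral_le_setIntegral_mul_setIntegral [SFinite μ]
    (hh : Measurable (Function.uncurry h)) (hB : MeasurableSet B) (hμB : μ B ≠ ∞)
    {w : ℝ → ℝ} {t C r k : ℝ} (ht : 0 ≤ t) (hr : -1 < r) (hw : ContinuousOn w (Icc 0 t))
    (hw0 : ∀ s ∈ Icc 0 t, 0 ≤ w s) (hh0 : ∀ y ∈ B, ∀ τ ∈ Icc 0 t, 0 ≤ h y τ)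
    (hhle : ∀ y ∈ B, ∀ τ ∈ Ioc 0 t, h y τ ≤ C * τ ^ r)
    (hhge : ∀ y ∈ B, ∀ τ ∈ Ico (t / 2) t, k ≤ h y τ) :
    k * μ.real B * ∫ s in Ioc 0 (t / 2), w s ≤
      ∫ s in Ioc 0 t, w s * ∫ y in B, h y (t - s) ∂μ := by
  have hnorm : ∀ τ ∈ Ioc 0 t, ∀ y ∈ B, ‖h y τ‖ ≤ C * τ ^ r := fun τ hτ y hy => by
    rw [Real.norm_of_nonneg (hh0 y hy τ ⟨hτ.1.le, hτ.2⟩)]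
    exact hhle y hy τ hτ
  have hmeas : Measurable fun p : ℝ × E => h p.2 p.1 := hh.comp measurable_swap
  refine mul_setIntegral_le_setIntegral_mul_comp_sub ht hw hw0 ?_
    (fun τ hτ => setIntegral_nonneg hB fun y hy => hh0 y hy τ hτ) fun τ hτ => ?_
  · refine integrableOn_Ioc_of_norm_le_rpow (C := C * μ.real B) hr
      hmeas.stronglyMeasurable.integral_prod_right'.aestronglyMeasurable fun τ hτ => ?_
    calc ‖∫ y in B, h y τ ∂μ‖ ≤ C * τ ^ r * μ.real B :=
          norm_setIntegral_le_of_norm_le_const hμB.lt_top (hnorm τ hτ)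
      _ = C * μ.real B * τ ^ r := by ring
  · have hτ' : τ ∈ Ioc 0 t := ⟨by linarith [hτ.1, hτ.2], hτ.2.le⟩
    have hint : IntegrableOn (fun y => h y τ) B μ :=
      Measure.integrableOn_of_bounded hμB (hmeas.comp measurable_prodMk_left).aestronglyMeasurable
        ((ae_restrict_iff' hB).2 (.of_forall (hnorm τ hτ')))
    simpa [mul_comm] using setIntegral_ge_of_const_le hB hμB (hhge · · τ hτ) hint

end SpaceTime

theorem ofReal_mul_rpow_le_eLpNorm {X : Type*} [MeasurableSpace X] {μ : Measure X} {p : ℝ≥0∞}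
    {g : X → ℝ} {L : ℝ} (hp : p ≠ 0) (hμ : μ ≠ 0) (hL : 0 ≤ L) (hg : ∀ᵐ x ∂μ, L ≤ g x) :
    ENNReal.ofReal L * μ univ ^ (1 / p.toReal) ≤ eLpNorm g p μ := by
  rw [← Real.enorm_eq_ofReal hL, ← eLpNorm_const L hp hμ]
  refine eLpNorm_mono_ae (hg.mono fun x hx => ?_)
  rw [Real.norm_of_nonneg hL, Real.norm_eq_abs]
  exact hx.trans (le_abs_self _)

section Shell

variable {E : Type*} [NormedAddCommGroup E] [NormedSpace ℝ E] [MeasurableSpace E]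
  [FiniteDimensional ℝ E] [Nontrivial E] (μ : Measure E) [μ.IsAddHaarMeasure]

theorem measureReal_closedBall_diff_ball_pos {a b : ℝ} (ha : 0 ≤ a) (hab : a < b) :
    0 < μ.real (closedBall 0 b \ ball 0 a) := by
  obtain ⟨x₀, hx₀⟩ := exists_norm_eq E (show 0 ≤ (a + b) / 2 by linarith)
  refine ENNReal.toReal_pos ?_ ((measure_mono sdiff_subset).trans_lt measure_closedBall_lt_top).ne
  refine ((measure_ball_pos μ x₀ (show 0 < (b - a) / 2 by linarith)).trans_le
    (measure_mono fun x hx => ?_)).ne'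
  rw [mem_ball, dist_eq_norm] at hx
  have h₁ := norm_sub_norm_le x x₀
  have h₂ := norm_sub_norm_le x₀ x
  rw [norm_sub_rev] at h₂
  simp only [Set.mem_sdiff, mem_closedBall_zero_iff, mem_ball_zero_iff, not_lt]
  constructor <;> linarith

theorem ofReal_le_eLpNorm_restrict_norm_ge [BorelSpace E] {p : ℝ≥0∞} (hp : p ≠ 0) {g : E → ℝ}
    {a b r L : ℝ} (ha : 0 ≤ a) (hab : a < b) (hr : 0 < r) (hL : 0 ≤ L)
    (hg : ∀ x, a * r ≤ ‖x‖ → ‖x‖ ≤ b * r → L ≤ g x) :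
    ENNReal.ofReal (L * (r ^ finrank ℝ E * μ.real (closedBall 0 b \ ball 0 a)) ^ (1 / p.toReal)) ≤
      eLpNorm g p (μ.restrict {x | a * r ≤ ‖x‖}) := by
  set S := closedBall (0 : E) b \ ball 0 a
  obtain ⟨hS0, hS_fin⟩ := ENNReal.toReal_pos_iff.1 (measureReal_closedBall_diff_ball_pos μ ha hab)
  have hS : MeasurableSet (r • S) :=
    (measurableSet_closedBall.diff measurableSet_ball).const_smul₀ r
  have hmem : ∀ x ∈ r • S, a * r ≤ ‖x‖ ∧ ‖x‖ ≤ b * r := by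
    rintro _ ⟨y, ⟨hyb, hya⟩, rfl⟩
    rw [mem_closedBall_zero_iff] at hyb
    rw [mem_ball_zero_iff, not_lt] at hya
    rw [norm_smul_of_nonneg hr.le]
    constructor <;> nlinarith
  have hvol : μ (r • S) = ENNReal.ofReal (r ^ finrank ℝ E * μ.real S) := by
    rw [Measure.addHaar_smul_of_nonneg μ hr.le, ENNReal.ofReal_mul (by positivity),
      ofReal_measureReal hS_fin.ne]
  have hvol_pos : μ (r • S) ≠ 0 := by
    rw [Measure.addHaar_smul_of_nonneg μ hr.le]
    exact mul_ne_zero (by simp [hr]) hS0.ne'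
  calc ENNReal.ofReal (L * (r ^ finrank ℝ E * μ.real S) ^ (1 / p.toReal))
      = ENNReal.ofReal L * μ.restrict (r • S) univ ^ (1 / p.toReal) := by
        rw [Measure.restrict_apply_univ, hvol, ENNReal.ofReal_rpow_of_nonneg (by positivity)
          (by positivity), ENNReal.ofReal_mul hL]
    _ ≤ eLpNorm g p (μ.restrict (r • S)) :=
        ofReal_mul_rpow_le_eLpNorm hp (by rwa [Ne, Measure.restrict_eq_zero]) hL
          ((ae_restrict_iff' hS).2 (.of_forall fun x hx => hg x (hmem x hx).1 (hmem x hx).2))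
    _ ≤ eLpNorm g p (μ.restrict {x | a * r ≤ ‖x‖}) :=
        eLpNorm_mono_measure _ (Measure.restrict_mono (fun x hx => (hmem x hx).1) le_rfl)

end Shell

namespace nonlocalHeatKernel

variable {E : Type*} [NormedAddCommGroup E] [NormedSpace ℝ E] [FiniteDimensional ℝ E]
  [MeasurableSpace E] [BorelSpace E] {α β n : ℝ} {G : E → ℝ}

theorem le_duhamel_ball {μ : Measure E} [IsFiniteMeasureOnCompacts μ] (hα0 : 0 < α)
    (hα1 : α ≤ 1) (hβ : 0 < β) (hn : 0 ≤ n) (hGm : Measurable G) (hG0 : ∀ ξ, 0 ≤ G ξ)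
    {c g R : ℝ} (hc : 0 ≤ c) (hg : 0 ≤ g) (hGle : ∀ ξ : E, 0 < ‖ξ‖ → G ξ ≤ c * ‖ξ‖ ^ (-(n + 2 * β)))
    (hGge : ∀ ξ : E, 0 < ‖ξ‖ → ‖ξ‖ ≤ R → g ≤ G ξ) {w : ℝ → ℝ} {t : ℝ} (ht : 0 ≤ t)
    (hw : ContinuousOn w (Icc 0 t)) (hw0 : ∀ s ∈ Icc 0 t, 0 ≤ w s) {x : E} (hx : 2 ≤ ‖x‖)
    (hxR : ‖x‖ + 1 ≤ R * (t / 2) ^ (α / (2 * β))) :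
    g * t ^ (α - 1 - α * n / (2 * β)) * μ.real (ball 0 1) * ∫ s in Ioc 0 (t / 2), w s ≤
      ∫ s in Ioc 0 t, w s * ∫ y in ball 0 1, nonlocalHeatKernel α β n G (x - y) (t - s) ∂μ := by
  have hxy : ∀ y ∈ ball (0 : E) 1, 1 ≤ ‖x - y‖ ∧ ‖x - y‖ ≤ ‖x‖ + 1 := fun y hy => by
    rw [mem_ball_zero_iff] at hy
    exact ⟨by linarith [norm_sub_norm_le x y], by linarith [norm_sub_le x y]⟩
  have hR : 0 ≤ R := by
    by_contra! hR
    nlinarith [rpow_nonneg (show 0 ≤ t / 2 by linarith) (α / (2 * β)), norm_nonneg x]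
  have ha : α - 1 - α * n / (2 * β) ≤ 0 := by
    have : 0 ≤ α * n / (2 * β) := by positivity
    linarith
  refine mul_setIntegral_le_setIntegral_mul_setIntegral (C := c) (r := 2 * α - 1)
    (h := fun y τ => nonlocalHeatKernel α β n G (x - y) τ) ((measurable_uncurry hGm).comp
      ((measurable_const.sub measurable_fst).prodMk measurable_snd)) measurableSet_ball
    measure_ball_lt_top.ne ht (by linarith) hw hw0 (fun y _ τ hτ => nonneg hG0 _ hτ.1)
    (fun y hy τ hτ => ?_) fun y hy τ hτ => ?_
  · obtain ⟨h1, -⟩ := hxy y hy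
    calc nonlocalHeatKernel α β n G (x - y) τ
        ≤ c * τ ^ (2 * α - 1) * ‖x - y‖ ^ (-(n + 2 * β)) :=
          le_rpow_mul hβ hGle hτ.1 (norm_pos_iff.1 (by linarith))
      _ ≤ c * τ ^ (2 * α - 1) * 1 := mul_le_mul_of_nonneg_left
          (rpow_le_one_of_one_le_of_nonpos h1 (by linarith)) (mul_nonneg hc (rpow_nonneg hτ.1.le _))
      _ = c * τ ^ (2 * α - 1) := mul_one _
  · obtain ⟨h1, h2⟩ := hxy y hy
    have hτ0 : 0 < τ := by linarith [hτ.1, hτ.2]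
    calc g * t ^ (α - 1 - α * n / (2 * β)) ≤ g * τ ^ (α - 1 - α * n / (2 * β)) :=
          mul_le_mul_of_nonneg_left (rpow_le_rpow_of_nonpos hτ0 hτ.2.le ha) hg
      _ ≤ nonlocalHeatKernel α β n G (x - y) τ :=
          le_of_norm_le hGge hτ0 (norm_pos_iff.1 (by linarith)) (h2.trans (hxR.trans
            (mul_le_mul_of_nonneg_left (rpow_le_rpow (by linarith) hτ.1 (by positivity)) hR)))

theorem exists_ofReal_le_eLpNorm_duhamel_ball [Nontrivial E] (μ : Measure E) [μ.IsAddHaarMeasure]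
    {d : ℕ} (hd : finrank ℝ E = d) (hα0 : 0 < α) (hα1 : α ≤ 1) (hβ : 0 < β) (hGm : Measurable G)
    (hG0 : ∀ ξ, 0 ≤ G ξ) {c : ℝ} (hc : 0 ≤ c)
    (hGle : ∀ ξ : E, 0 < ‖ξ‖ → G ξ ≤ c * ‖ξ‖ ^ (-((d : ℝ) + 2 * β)))
    (hGge : ∀ R, ∃ g > 0, ∀ ξ : E, 0 < ‖ξ‖ → ‖ξ‖ ≤ R → g ≤ G ξ) {w : ℝ → ℝ}
    (hw : ContinuousOn w (Ici 0)) (hw0 : ∀ s, 0 ≤ s → 0 ≤ w s) {ν : ℝ} (hν : 0 < ν)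
    {p : ℝ≥0∞} (hp : p ≠ 0) :
    ∃ C > 0, ∀ᶠ t in atTop, ENNReal.ofReal
        (C * t ^ (α - 1 - (α * d / (2 * β)) * (1 - 1 / p.toReal)) * ∫ s in Ioc 0 (t / 2), w s) ≤
      eLpNorm (fun x => ∫ s in Ioc 0 t, w s *
          ∫ y in ball 0 1, nonlocalHeatKernel α β d G (x - y) (t - s) ∂μ) p
        (μ.restrict {x | ν * t ^ (α / (2 * β)) ≤ ‖x‖}) := by
  set κ := α / (2 * β) with hκ
  -- for `|x| ≤ (ν + 1) t^κ`, `|y| < 1` and `t/2 ≤ τ`, this radius bounds `τ^{-κ} |x - y|`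
  obtain ⟨g, hg, hGge⟩ := hGge (2 ^ κ * (ν + 2))
  set V := μ.real (ball (0 : E) 1)
  set W := μ.real (closedBall (0 : E) (ν + 1) \ ball 0 ν)
  have hV : 0 < V := ENNReal.toReal_pos (measure_ball_pos _ _ one_pos).ne' measure_ball_lt_top.ne
  have hW : 0 < W := measureReal_closedBall_diff_ball_pos μ hν.le (lt_add_one ν)
  refine ⟨g * V * W ^ (1 / p.toReal), by positivity, ?_⟩
  filter_upwards [(tendsto_rpow_atTop (by positivity : 0 < κ)).eventually_ge_atTop (2 / ν),
    eventually_ge_atTop 2] with t hνt ht2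
  rw [div_le_iff₀' hν] at hνt
  have ht0 : 0 < t := by linarith
  have htκ : 1 ≤ t ^ κ := one_le_rpow (by linarith) (by positivity)
  have hI : 0 ≤ ∫ s in Ioc 0 (t / 2), w s :=
    setIntegral_nonneg measurableSet_Ioc fun s hs => hw0 s hs.1.le
  have hRt : 2 ^ κ * (ν + 2) * (t / 2) ^ κ = (ν + 2) * t ^ κ := by
    rw [mul_comm (2 ^ κ : ℝ), mul_assoc, ← mul_rpow (by norm_num) (by linarith),
      mul_div_cancel₀ t two_ne_zero]
  convert ofReal_le_eLpNorm_restrict_norm_ge μ hp hν.le (lt_add_one ν) (rpow_pos_of_pos ht0 κ)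
    (mul_nonneg (mul_nonneg (mul_nonneg hg.le (rpow_nonneg ht0.le _)) hV.le) hI)
    (fun x hx₁ hx₂ => le_duhamel_ball hα0 hα1 hβ d.cast_nonneg hGm hG0 hc hg.le hGle hGge
      ht0.le (hw.mono Icc_subset_Ici_self) (fun s hs => hw0 s hs.1) (by linarith) (by linarith))
    using 2
  rw [hd, ← rpow_natCast, ← rpow_mul ht0.le, mul_rpow (by positivity) hW.le, ← rpow_mul ht0.le,
    show α - 1 - α * d / (2 * β) * (1 - 1 / p.toReal) =
      α - 1 - α * d / (2 * β) + κ * d * (1 / p.toReal) by rw [hκ]; ring, rpow_add ht0]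
  ring

end nonlocalHeatKernel

theorem exterior_region_lower_bound
    (N : ℕ) (α β : ℝ)
    (hα : 0 < α ∧ α < 1) (hβ : 0 < β ∧ β ≤ 1) (hN : 4 * β < (N : ℝ))
    (G : EuclideanSpace ℝ (Fin N) → ℝ)
    (hGmeas : Measurable G) (hGnonneg : ∀ ξ, 0 ≤ G ξ)
    (c₁ c₂ : ℝ) (hc₁ : 0 < c₁) (hc₂ : 0 < c₂)
    (hGin : ∀ ξ : EuclideanSpace ℝ (Fin N), 0 < ‖ξ‖ → ‖ξ‖ ≤ 1 →
      c₁ * ‖ξ‖ ^ (4 * β - (N : ℝ)) ≤ G ξ ∧ G ξ ≤ c₂ * ‖ξ‖ ^ (4 * β - (N : ℝ)))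
    (hGout : ∀ ξ : EuclideanSpace ℝ (Fin N), 1 ≤ ‖ξ‖ →
      c₁ * ‖ξ‖ ^ (-((N : ℝ) + 2 * β)) ≤ G ξ ∧ G ξ ≤ c₂ * ‖ξ‖ ^ (-((N : ℝ) + 2 * β)))
    (Y : EuclideanSpace ℝ (Fin N) → ℝ → ℝ)
    (hY : ∀ x t, Y x t = t ^ (α - 1 - α * (N : ℝ) / (2 * β)) * G ((t ^ (-(α / (2 * β)))) • x))
    (γ : ℝ) (f : EuclideanSpace ℝ (Fin N) → ℝ → ℝ)
    (hf : ∀ x t, f x t =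
      (1 + t) ^ (-γ) * Set.indicator (Metric.ball (0 : EuclideanSpace ℝ (Fin N)) 1) (fun _ => (1:ℝ)) x)
    (u : EuclideanSpace ℝ (Fin N) → ℝ → ℝ)
    (hu : ∀ x t, u x t = ∫ s in Set.Ioc (0:ℝ) t, ∫ y, Y (x - y) (t - s) * f y s)
    (p : ℝ≥0∞) (hp : 1 ≤ p) (ν : ℝ) (hν : 0 < ν) :
    ∃ c : ℝ, 0 < c ∧ ∃ t₀ : ℝ, 2 ≤ t₀ ∧ ∀ t : ℝ, t₀ ≤ t →
      ENNReal.ofReal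
          (c * t ^ (α - 1 - (α * (N : ℝ) / (2 * β)) * (1 - 1 / p.toReal)) *
            ∫ s in Set.Ioc (0:ℝ) (t / 2), (1 + s) ^ (-γ)) ≤
        eLpNorm (fun x => u x t) p
          (volume.restrict {x : EuclideanSpace ℝ (Fin N) | ν * t ^ (α / (2 * β)) ≤ ‖x‖}) := by
  obtain ⟨hα0, hα1⟩ := hα
  obtain rfl : Y = nonlocalHeatKernel α β N G := funext fun x => funext (hY x)
  have hN0 : 0 < N := by exact_mod_cast (show (0 : ℝ) < N by linarith [hβ.1])
  have : Nontrivial (EuclideanSpace ℝ (Fin N)) :=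
    nontrivial_of_finrank_pos (by rwa [finrank_euclideanSpace_fin])
  have hGle : ∀ ξ : EuclideanSpace ℝ (Fin N), 0 < ‖ξ‖ → G ξ ≤ c₂ * ‖ξ‖ ^ (-((N : ℝ) + 2 * β)) :=
    fun ξ => profile_le_of_pos hc₂.le (by linarith) (fun ξ h1 h2 => (hGin ξ h1 h2).2)
      (fun ξ h => (hGout ξ h).2)
  have hGge := exists_pos_le_profile hc₁ (by linarith) (by linarith [hβ.1])
    (fun ξ h1 h2 => (hGin ξ h1 h2).1) (fun ξ h => (hGout ξ h).1)
  have hw : ContinuousOn (fun s : ℝ => (1 + s) ^ (-γ)) (Ici 0) :=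
    ContinuousOn.rpow_const (by fun_prop) fun s hs =>
      Or.inl (by linarith [mem_Ici.1 hs] : 0 < 1 + s).ne'
  obtain ⟨C, hC, hbound⟩ := nonlocalHeatKernel.exists_ofReal_le_eLpNorm_duhamel_ball volume
    finrank_euclideanSpace_fin hα0 hα1.le hβ.1 hGmeas hGnonneg hc₂.le hGle hGge hw
    (fun s hs => rpow_nonneg (by linarith) _) hν (zero_lt_one.trans_le hp).ne'
  obtain ⟨t₁, ht₁⟩ := eventually_atTop.1 hbound
  refine ⟨C, hC, max 2 t₁, le_max_left _ _, fun t ht => ?_⟩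
  simp_rw [hu, hf, integral_mul_const_mul_indicator_one _ measurableSet_ball]
  exact ht₁ t ((le_max_right _ _).trans ht)
end

section
/- Let p ∈ [1, ∞], γ ∈ ℝ, 0 < ν < μ < ∞, let g : (0,∞) → (0,∞) satisfy g(t) → ∞ and g(t)/t^{α/(2β)} → 0 as t → ∞, and let f(x,t) := (1+t)^{−γ} χ_{B₁}(x), where B₁ is the unit ball of ℝ^N. Then there exist c > 0 and t₀ ≥ 2 such that the mild solution u satisfies, for all t ≥ t₀, ‖u(·,t)‖_{L^p({ν ≤ |x|/g(t) ≤ μ})} ≥ c t^{−γ} g(t)^{2β−N(1−1/p)}. -/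
/-!
Away from the source ball (`|w| ≥ 1`) the kernel is at most `c₂ (1 + τ^{2α-1})`, which is
integrable near `τ = 0`; this makes the Duhamel integral a genuine Lebesgue integral with a
nonnegative integrand, so it dominates its restriction to any time window. In the parabolic region
`|w| ≤ τ^{α/(2β)}` it is at least `c₁ |w|^{4β-N} τ^{-1-α}`. For `x` in the annulus
`ν g(t) ≤ |x| ≤ μ g(t)` the source is seen at distances `≤ L := 2μ g(t)`, so on the window
`t - s ∈ [R, 2R]`, `R := L^{2β/α}`, the kernel is parabolic; as `g(t) = o(t^{α/(2β)})` the window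
lies in `[t/2, t]`, where `(1+s)^{-γ} ≍ t^{-γ}`. This window contributes
`L^{4β-N} R^{-1-α} · R · t^{-γ} = L^{2β-N} t^{-γ}`, and the annulus has volume `≍ g(t)^N`.
-/

open MeasureTheory Real Set Filter
open scoped ENNReal Pointwise

lemma integral_mul_const_mul_indicator {X : Type*} [MeasurableSpace X] {ρ : Measure X}
    {s : Set X} (hs : MeasurableSet s) (F : X → ℝ) (c : ℝ) :
    ∫ y, F y * (c * s.indicator (fun _ => 1) y) ∂ρ = c * ∫ y in s, F y ∂ρ := by
  have : (fun y => F y * (c * s.indicator (fun _ => (1 : ℝ)) y)) =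
      s.indicator (fun y => c * F y) := by
    ext y
    by_cases hy : y ∈ s <;> simp [hy, mul_comm]
  rw [this, integral_indicator hs, integral_const_mul]

lemma mul_measureReal_le_setIntegral {X : Type*} [MeasurableSpace X] {ρ : Measure X}
    {s t : Set X} (hst : s ⊆ t) (hs : MeasurableSet s) (ht : MeasurableSet t) (hρs : ρ s ≠ ∞)
    {F : X → ℝ} (hF : IntegrableOn F t ρ) (hF₀ : ∀ x ∈ t, 0 ≤ F x) {A : ℝ}
    (hA : ∀ x ∈ s, A ≤ F x) :
    A * ρ.real s ≤ ∫ x in t, F x ∂ρ :=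
  (setIntegral_ge_of_const_le_real hs hρs hA (hF.mono_set hst)).trans
    (setIntegral_mono_set hF (ae_restrict_of_forall_mem ht hF₀) hst.eventuallyLE)

lemma integrableOn_Ioc_of_norm_le_one_add_rpow {F : ℝ → ℝ} {t C κ : ℝ} (ht : 0 ≤ t)
    (hκ : -1 < κ) (hF : AEStronglyMeasurable F (volume.restrict (Ioc 0 t)))
    (hFC : ∀ s ∈ Ioc 0 t, ‖F s‖ ≤ C * (1 + (t - s) ^ κ)) :
    IntegrableOn F (Ioc 0 t) := by
  have hsing : IntegrableOn (fun s => (t - s) ^ κ) (Ioc 0 t) := by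
    have := (intervalIntegral.intervalIntegrable_rpow' (a := 0) (b := t) hκ).comp_sub_left t
    rw [sub_zero, sub_self] at this
    exact (intervalIntegrable_iff_integrableOn_Ioc_of_le ht).1 this.symm
  refine Integrable.mono' (((integrableOn_const measure_Ioc_lt_top.ne).add hsing).const_mul C)
    hF (ae_restrict_of_forall_mem measurableSet_Ioc hFC)

lemma two_rpow_neg_abs_mul_rpow_le {t r : ℝ} (ht : 0 < t) (hr₁ : t / 2 ≤ r) (hr₂ : r ≤ 2 * t)
    (γ : ℝ) : 2 ^ (-|γ|) * t ^ (-γ) ≤ r ^ (-γ) := by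
  have hq : 0 < r / t := div_pos (by linarith) ht
  have hlog : |log (r / t)| ≤ log 2 := by
    rw [abs_le, ← log_inv, ← one_div]
    constructor
    · exact log_le_log (by norm_num) (by rw [le_div_iff₀ ht]; linarith)
    · exact log_le_log hq (by rw [div_le_iff₀ ht]; linarith)
  calc 2 ^ (-|γ|) * t ^ (-γ) ≤ (r / t) ^ (-γ) * t ^ (-γ) := by
        gcongr
        rw [rpow_def_of_pos two_pos, rpow_def_of_pos hq, exp_le_exp]
        have h₁ := le_abs_self (γ * log (r / t))
        have h₂ := mul_le_mul_of_nonneg_left hlog (abs_nonneg γ)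
        rw [abs_mul] at h₁
        linarith
    _ = r ^ (-γ) := by rw [← mul_rpow hq.le ht.le, div_mul_cancel₀ _ ht.ne']

lemma one_le_norm_sub_of_mem_ball {E : Type*} [SeminormedAddCommGroup E] {x y : E}
    (hx : 2 ≤ ‖x‖) (hy : y ∈ Metric.ball (0 : E) 1) : 1 ≤ ‖x - y‖ := by
  have := norm_sub_norm_le x y
  have := mem_ball_zero_iff.1 hy
  linarith

lemma ofReal_mul_measureReal_rpow_le_eLpNorm {X : Type*} [MeasurableSpace X] {ρ : Measure X}
    {s : Set X} (hs : MeasurableSet s) (hρs₀ : ρ s ≠ 0) (hρs : ρ s ≠ ∞) {p : ℝ≥0∞} (hp : p ≠ 0)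
    {f : X → ℝ} {a : ℝ} (ha : 0 ≤ a) (hf : ∀ x ∈ s, a ≤ f x) :
    ENNReal.ofReal (a * ρ.real s ^ (1 / p.toReal)) ≤ eLpNorm f p (ρ.restrict s) := by
  calc ENNReal.ofReal (a * ρ.real s ^ (1 / p.toReal))
      = eLpNorm (fun _ => a) p (ρ.restrict s) := by
        rw [eLpNorm_const a hp (by rwa [Ne, Measure.restrict_eq_zero]), Measure.restrict_apply_univ,
          ENNReal.ofReal_mul ha, ← ENNReal.ofReal_rpow_of_nonneg measureReal_nonneg (by positivity),
          ofReal_measureReal hρs, Real.enorm_of_nonneg ha]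
    _ ≤ eLpNorm f p (ρ.restrict s) := eLpNorm_mono_ae <| ae_restrict_of_forall_mem hs fun x hx => by
        rw [norm_of_nonneg ha]
        exact (hf x hx).trans (le_abs_self _)

lemma volume_setOf_norm_div_mem {E : Type*} [NormedAddCommGroup E] [NormedSpace ℝ E]
    [FiniteDimensional ℝ E] [MeasureSpace E] [BorelSpace E] [(volume : Measure E).IsAddHaarMeasure]
    {r : ℝ} (hr : 0 < r) (ν μ : ℝ) :
    volume {x : E | ν ≤ ‖x‖ / r ∧ ‖x‖ / r ≤ μ} =
      ENNReal.ofReal (r ^ Module.finrank ℝ E) * volume {x : E | ν ≤ ‖x‖ ∧ ‖x‖ ≤ μ} := by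
  have : {x : E | ν ≤ ‖x‖ / r ∧ ‖x‖ / r ≤ μ} =
      (fun x => r⁻¹ • x) ⁻¹' {x : E | ν ≤ ‖x‖ ∧ ‖x‖ ≤ μ} := by
    ext x
    simp [norm_smul, abs_of_pos hr, div_eq_inv_mul]
  rw [this, Measure.addHaar_preimage_smul _ (inv_ne_zero hr.ne'), inv_pow, inv_inv,
    abs_of_pos (by positivity)]

lemma measureReal_setOf_norm_mem_pos {E : Type*} [NormedAddCommGroup E] [NormedSpace ℝ E]
    [Nontrivial E] [ProperSpace E] [MeasureSpace E] [(volume : Measure E).IsOpenPosMeasure]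
    [IsFiniteMeasureOnCompacts (volume : Measure E)] {ν μ : ℝ} (hν : 0 ≤ ν) (hνμ : ν < μ) :
    0 < volume.real {x : E | ν ≤ ‖x‖ ∧ ‖x‖ ≤ μ} := by
  obtain ⟨x, hx⟩ := exists_norm_eq E (c := (ν + μ) / 2) (by linarith)
  have hopen : IsOpen {x : E | ν < ‖x‖ ∧ ‖x‖ < μ} :=
    (isOpen_lt continuous_const continuous_norm).inter (isOpen_lt continuous_norm continuous_const)
  have hbdd : Bornology.IsBounded {x : E | ν ≤ ‖x‖ ∧ ‖x‖ ≤ μ} :=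
    (Metric.isBounded_closedBall (x := 0) (r := μ)).subset fun x hx => by simpa using hx.2
  refine ENNReal.toReal_pos_iff.2 ⟨(hopen.measure_pos volume ⟨x, ?_⟩).trans_le
    (measure_mono fun x hx => ⟨hx.1.le, hx.2.le⟩), hbdd.measure_lt_top⟩
  change ν < ‖x‖ ∧ ‖x‖ < μ
  rw [hx]
  constructor <;> linarith

lemma ofReal_le_eLpNorm_restrict_setOf_norm_div_mem {E : Type*} [NormedAddCommGroup E]
    [NormedSpace ℝ E] [FiniteDimensional ℝ E] [Nontrivial E] [MeasureSpace E] [BorelSpace E]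
    [(volume : Measure E).IsAddHaarMeasure] {ν μ r : ℝ} (hν : 0 ≤ ν) (hνμ : ν < μ) (hr : 0 < r)
    {p : ℝ≥0∞} (hp : p ≠ 0) {F : E → ℝ} {a : ℝ} (ha : 0 ≤ a)
    (hF : ∀ x, ν ≤ ‖x‖ / r → ‖x‖ / r ≤ μ → a ≤ F x) :
    ENNReal.ofReal (a * r ^ (Module.finrank ℝ E * (1 / p.toReal)) *
        volume.real {x : E | ν ≤ ‖x‖ ∧ ‖x‖ ≤ μ} ^ (1 / p.toReal)) ≤
      eLpNorm F p (volume.restrict {x : E | ν ≤ ‖x‖ / r ∧ ‖x‖ / r ≤ μ}) := by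
  have hS := volume_setOf_norm_div_mem (E := E) hr ν μ
  obtain ⟨hA₀, hA⟩ := ENNReal.toReal_pos_iff.1 (measureReal_setOf_norm_mem_pos (E := E) hν hνμ)
  have hSm : MeasurableSet {x : E | ν ≤ ‖x‖ / r ∧ ‖x‖ / r ≤ μ} :=
    (measurableSet_le measurable_const (measurable_norm.div_const _)).inter
      (measurableSet_le (measurable_norm.div_const _) measurable_const)
  have hS₀ : volume {x : E | ν ≤ ‖x‖ / r ∧ ‖x‖ / r ≤ μ} ≠ 0 := by
    rw [hS]
    exact mul_ne_zero (ENNReal.ofReal_pos.2 (by positivity)).ne' hA₀.ne'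
  have hS_top : volume {x : E | ν ≤ ‖x‖ / r ∧ ‖x‖ / r ≤ μ} ≠ ∞ := by
    rw [hS]
    exact ENNReal.mul_ne_top ENNReal.ofReal_ne_top hA.ne
  convert ofReal_mul_measureReal_rpow_le_eLpNorm hSm hS₀ hS_top hp ha
    (fun x hx => hF x hx.1 hx.2) using 2
  simp only [Measure.real]
  rw [hS, ENNReal.toReal_mul, ENNReal.toReal_ofReal (by positivity),
    mul_rpow (by positivity) ENNReal.toReal_nonneg, ← rpow_natCast, ← rpow_mul hr.le]
  ring

lemma eventually_mul_le_div_four_rpow {g : ℝ → ℝ} {e : ℝ}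
    (hg : Tendsto (fun t => g t / t ^ e) atTop (nhds 0)) {k : ℝ} (hk : 0 < k) :
    ∀ᶠ t in atTop, k * g t ≤ (t / 4) ^ e := by
  have hδ : 0 < 1 / (k * 4 ^ e) := by positivity
  filter_upwards [hg.eventually (eventually_le_nhds hδ), eventually_gt_atTop 0] with t hgt ht
  rw [div_le_iff₀ (rpow_pos_of_pos ht _)] at hgt
  rw [div_rpow ht.le (by norm_num)]
  calc k * g t ≤ k * (1 / (k * 4 ^ e) * t ^ e) := by gcongr
    _ = t ^ e / 4 ^ e := by field_simp

section Kernel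

variable {E : Type*} [NormedAddCommGroup E] [NormedSpace ℝ E]

noncomputable def fundamentalSolution (α β d : ℝ) (G : E → ℝ) (x : E) (t : ℝ) : ℝ :=
  t ^ (α - 1 - α * d / (2 * β)) * G (t ^ (-(α / (2 * β))) • x)

variable {α β d : ℝ} {G : E → ℝ}

lemma fundamentalSolution_nonneg (hG : ∀ ξ, 0 ≤ G ξ) (w : E) {τ : ℝ} (hτ : 0 ≤ τ) :
    0 ≤ fundamentalSolution α β d G w τ :=
  mul_nonneg (rpow_nonneg hτ _) (hG _)

lemma measurable_fundamentalSolution [MeasurableSpace E] [BorelSpace E]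
    [SecondCountableTopology E] (hG : Measurable G) :
    Measurable (Function.uncurry (fundamentalSolution α β d G)) :=
  (measurable_snd.pow_const _).mul (hG.comp ((measurable_snd.pow_const _).smul measurable_fst))

lemma rpow_mul_const_mul_norm_rpow_neg_smul {τ : ℝ} (hτ : 0 < τ) (c₀ e c a : ℝ) (w : E) :
    τ ^ c₀ * (c * ‖τ ^ (-e) • w‖ ^ a) = c * ‖w‖ ^ a * τ ^ (c₀ - e * a) := by
  rw [norm_smul, norm_of_nonneg (rpow_nonneg hτ.le _),
    mul_rpow (rpow_nonneg hτ.le _) (norm_nonneg _), ← rpow_mul hτ.le, sub_eq_add_neg, rpow_add hτ,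
    neg_mul]
  ring

lemma fundamentalSolution_le (hα : 0 < α) (hβ : 0 < β) (hd : 4 * β ≤ d) {c₂ : ℝ} (hc₂ : 0 ≤ c₂)
    (hGin : ∀ ξ : E, 0 < ‖ξ‖ → ‖ξ‖ ≤ 1 → G ξ ≤ c₂ * ‖ξ‖ ^ (4 * β - d))
    (hGout : ∀ ξ : E, 1 ≤ ‖ξ‖ → G ξ ≤ c₂ * ‖ξ‖ ^ (-(d + 2 * β)))
    {w : E} (hw : 1 ≤ ‖w‖) {τ : ℝ} (hτ : 0 ≤ τ) :
    fundamentalSolution α β d G w τ ≤ c₂ * (1 + τ ^ (2 * α - 1)) := by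
  have hτα : 0 ≤ τ ^ (2 * α - 1) := rpow_nonneg hτ _
  rcases hτ.eq_or_lt with rfl | hτ
  · have hexp : α - 1 - α * d / (2 * β) ≠ 0 := by
      have : 2 * α ≤ α * d / (2 * β) := by rw [le_div_iff₀ (by positivity)]; nlinarith
      linarith
    rw [fundamentalSolution, zero_rpow hexp, zero_mul]
    positivity
  have hξ : ‖τ ^ (-(α / (2 * β))) • w‖ = τ ^ (-(α / (2 * β))) * ‖w‖ := by
    rw [norm_smul, norm_of_nonneg (rpow_nonneg hτ.le _)]
  unfold fundamentalSolution
  rcases le_or_gt ‖τ ^ (-(α / (2 * β))) • w‖ 1 with hin | hout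
  · -- `τ ≥ ‖w‖ ^ (2β/α) ≥ 1` in this regime
    have hτ1 : 1 ≤ τ := by
      by_contra! hτ1
      have : 1 < τ ^ (-(α / (2 * β))) := one_lt_rpow_of_pos_of_lt_one_of_neg hτ hτ1
        (neg_neg_of_pos (by positivity))
      nlinarith
    calc _ ≤ τ ^ (α - 1 - α * d / (2 * β)) * (c₂ * ‖τ ^ (-(α / (2 * β))) • w‖ ^ (4 * β - d)) :=
          mul_le_mul_of_nonneg_left (hGin _ (by rw [hξ]; positivity) hin) (rpow_nonneg hτ.le _)
      _ = c₂ * ‖w‖ ^ (4 * β - d) * τ ^ (-1 - α) := by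
          rw [rpow_mul_const_mul_norm_rpow_neg_smul hτ]
          congr 2
          field_simp
          ring
      _ ≤ c₂ * 1 * 1 := by
          gcongr
          · exact rpow_le_one_of_one_le_of_nonpos hw (by linarith)
          · exact rpow_le_one_of_one_le_of_nonpos hτ1 (by linarith)
      _ ≤ c₂ * (1 + τ ^ (2 * α - 1)) := by nlinarith
  · calc _ ≤ τ ^ (α - 1 - α * d / (2 * β)) * (c₂ * ‖τ ^ (-(α / (2 * β))) • w‖ ^ (-(d + 2 * β))) :=
          mul_le_mul_of_nonneg_left (hGout _ hout.le) (rpow_nonneg hτ.le _)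
      _ = c₂ * ‖w‖ ^ (-(d + 2 * β)) * τ ^ (2 * α - 1) := by
          rw [rpow_mul_const_mul_norm_rpow_neg_smul hτ]
          congr 2
          field_simp
          ring
      _ ≤ c₂ * 1 * τ ^ (2 * α - 1) := by
          gcongr
          exact rpow_le_one_of_one_le_of_nonpos hw (by linarith)
      _ ≤ c₂ * (1 + τ ^ (2 * α - 1)) := by nlinarith

lemma le_fundamentalSolution (hβ : β ≠ 0) {c₁ : ℝ}
    (hGin : ∀ ξ : E, 0 < ‖ξ‖ → ‖ξ‖ ≤ 1 → c₁ * ‖ξ‖ ^ (4 * β - d) ≤ G ξ)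
    {w : E} (hw : 0 < ‖w‖) {τ : ℝ} (hτ : 0 < τ) (hwτ : ‖w‖ ≤ τ ^ (α / (2 * β))) :
    c₁ * ‖w‖ ^ (4 * β - d) * τ ^ (-1 - α) ≤ fundamentalSolution α β d G w τ := by
  have hξ : ‖τ ^ (-(α / (2 * β))) • w‖ = τ ^ (-(α / (2 * β))) * ‖w‖ := by
    rw [norm_smul, norm_of_nonneg (rpow_nonneg hτ.le _)]
  have hin : ‖τ ^ (-(α / (2 * β))) • w‖ ≤ 1 := by
    rw [hξ, rpow_neg hτ.le, inv_mul_le_one₀ (rpow_pos_of_pos hτ _)]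
    exact hwτ
  calc c₁ * ‖w‖ ^ (4 * β - d) * τ ^ (-1 - α)
      = τ ^ (α - 1 - α * d / (2 * β)) * (c₁ * ‖τ ^ (-(α / (2 * β))) • w‖ ^ (4 * β - d)) := by
        rw [rpow_mul_const_mul_norm_rpow_neg_smul hτ]
        congr 2
        field_simp
        ring
    _ ≤ fundamentalSolution α β d G w τ :=
        mul_le_mul_of_nonneg_left (hGin _ (by rw [hξ]; positivity) hin) (rpow_nonneg hτ.le _)

end Kernel

section Duhamel

variable {E : Type*} [NormedAddCommGroup E] [MeasureSpace E]

noncomputable def ballPotential (K : E → ℝ → ℝ) (x : E) (τ : ℝ) : ℝ :=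
  ∫ y in Metric.ball (0 : E) 1, K (x - y) τ

noncomputable def ballMildSolution (K : E → ℝ → ℝ) (γ : ℝ) (x : E) (t : ℝ) : ℝ :=
  ∫ s in Ioc 0 t, (1 + s) ^ (-γ) * ballPotential K x (t - s)

variable [NormedSpace ℝ E] [FiniteDimensional ℝ E] [(volume : Measure E).IsAddHaarMeasure]
  {K : E → ℝ → ℝ} {α c₂ : ℝ}

lemma norm_ballPotential_le (hK₀ : ∀ w τ, 0 ≤ τ → 0 ≤ K w τ)
    (hKle : ∀ w τ, 1 ≤ ‖w‖ → 0 ≤ τ → K w τ ≤ c₂ * (1 + τ ^ (2 * α - 1)))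
    {x : E} (hx : 2 ≤ ‖x‖) {τ : ℝ} (hτ : 0 ≤ τ) :
    ‖ballPotential K x τ‖ ≤ c₂ * (1 + τ ^ (2 * α - 1)) * volume.real (Metric.ball (0 : E) 1) :=
  norm_setIntegral_le_of_norm_le_const measure_ball_lt_top fun y hy => by
    rw [norm_of_nonneg (hK₀ _ _ hτ)]
    exact hKle _ _ (one_le_norm_sub_of_mem_ball hx hy) hτ

variable [BorelSpace E]

lemma measurable_ballPotential (hKm : Measurable (Function.uncurry K)) (x : E) :
    Measurable (ballPotential K x) := by
  have : Measurable fun q : ℝ × E => K (x - q.2) q.1 :=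
    hKm.comp ((measurable_const.sub measurable_snd).prodMk measurable_fst)
  exact this.stronglyMeasurable.integral_prod_right'.measurable

lemma integrableOn_ball_of_norm_sub_ge (hKm : Measurable (Function.uncurry K))
    (hK₀ : ∀ w τ, 0 ≤ τ → 0 ≤ K w τ)
    (hKle : ∀ w τ, 1 ≤ ‖w‖ → 0 ≤ τ → K w τ ≤ c₂ * (1 + τ ^ (2 * α - 1)))
    {x : E} (hx : 2 ≤ ‖x‖) {τ : ℝ} (hτ : 0 ≤ τ) :
    IntegrableOn (fun y => K (x - y) τ) (Metric.ball (0 : E) 1) := by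
  refine Measure.integrableOn_of_bounded measure_ball_lt_top.ne
    (hKm.comp ((measurable_const.sub measurable_id).prodMk measurable_const)).aestronglyMeasurable
    (M := c₂ * (1 + τ ^ (2 * α - 1))) (ae_restrict_of_forall_mem measurableSet_ball fun y hy => ?_)
  rw [norm_of_nonneg (hK₀ _ _ hτ)]
  exact hKle _ _ (one_le_norm_sub_of_mem_ball hx hy) hτ

lemma le_ballPotential (hKm : Measurable (Function.uncurry K))
    (hK₀ : ∀ w τ, 0 ≤ τ → 0 ≤ K w τ)
    (hKle : ∀ w τ, 1 ≤ ‖w‖ → 0 ≤ τ → K w τ ≤ c₂ * (1 + τ ^ (2 * α - 1)))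
    {β d c₁ : ℝ} (hd : 4 * β ≤ d) (hc₁ : 0 ≤ c₁)
    (hKge : ∀ w τ, 0 < ‖w‖ → 0 < τ → ‖w‖ ≤ τ ^ (α / (2 * β)) →
      c₁ * ‖w‖ ^ (4 * β - d) * τ ^ (-1 - α) ≤ K w τ)
    {x : E} (hx : 2 ≤ ‖x‖) {L : ℝ} (hxL : ‖x‖ + 1 ≤ L) {τ : ℝ} (hτ : 0 < τ)
    (hLτ : L ≤ τ ^ (α / (2 * β))) :
    c₁ * L ^ (4 * β - d) * τ ^ (-1 - α) * volume.real (Metric.ball (0 : E) 1) ≤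
      ballPotential K x τ := by
  refine setIntegral_ge_of_const_le_real measurableSet_ball measure_ball_lt_top.ne (fun y hy => ?_)
    (integrableOn_ball_of_norm_sub_ge hKm hK₀ hKle hx hτ.le)
  have hxy₁ := one_le_norm_sub_of_mem_ball hx hy
  have hxy₂ : ‖x - y‖ ≤ L := by
    linarith [norm_sub_le x y, mem_ball_zero_iff.1 hy]
  calc c₁ * L ^ (4 * β - d) * τ ^ (-1 - α) ≤ c₁ * ‖x - y‖ ^ (4 * β - d) * τ ^ (-1 - α) := by
        refine mul_le_mul_of_nonneg_right (mul_le_mul_of_nonneg_left ?_ hc₁) (rpow_nonneg hτ.le _)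
        exact rpow_le_rpow_of_nonpos (by linarith) hxy₂ (by linarith)
    _ ≤ K (x - y) τ := hKge _ _ (by linarith) hτ (hxy₂.trans hLτ)

lemma integrableOn_rpow_mul_ballPotential (hα : 0 < α) (hKm : Measurable (Function.uncurry K))
    (hK₀ : ∀ w τ, 0 ≤ τ → 0 ≤ K w τ)
    (hKle : ∀ w τ, 1 ≤ ‖w‖ → 0 ≤ τ → K w τ ≤ c₂ * (1 + τ ^ (2 * α - 1)))
    {x : E} (hx : 2 ≤ ‖x‖) {t : ℝ} (ht : 0 ≤ t) (γ : ℝ) :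
    IntegrableOn (fun s => (1 + s) ^ (-γ) * ballPotential K x (t - s)) (Ioc 0 t) := by
  have hΦ : IntegrableOn (fun s => ballPotential K x (t - s)) (Icc 0 t) := by
    rw [integrableOn_Icc_iff_integrableOn_Ioc]
    refine integrableOn_Ioc_of_norm_le_one_add_rpow (κ := 2 * α - 1) ht (by linarith)
      ((measurable_ballPotential hKm x).comp
        (measurable_const.sub measurable_id)).aestronglyMeasurable
      (C := c₂ * volume.real (Metric.ball (0 : E) 1)) fun s hs => ?_
    have := norm_ballPotential_le hK₀ hKle hx (sub_nonneg.2 hs.2)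
    linarith
  have hcont : ContinuousOn (fun s : ℝ => (1 + s) ^ (-γ)) (Icc 0 t) :=
    (continuousOn_const.add continuousOn_id).rpow_const fun s hs =>
      Or.inl (ne_of_gt (show (0 : ℝ) < 1 + s by linarith [hs.1]))
  exact (hΦ.continuousOn_mul hcont isCompact_Icc).mono_set Ioc_subset_Icc_self

lemma le_ballMildSolution (hα : 0 < α) (hKm : Measurable (Function.uncurry K))
    (hK₀ : ∀ w τ, 0 ≤ τ → 0 ≤ K w τ)
    (hKle : ∀ w τ, 1 ≤ ‖w‖ → 0 ≤ τ → K w τ ≤ c₂ * (1 + τ ^ (2 * α - 1)))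
    {β d c₁ : ℝ} (hβ : 0 < β) (hd : 4 * β ≤ d) (hc₁ : 0 ≤ c₁)
    (hKge : ∀ w τ, 0 < ‖w‖ → 0 < τ → ‖w‖ ≤ τ ^ (α / (2 * β)) →
      c₁ * ‖w‖ ^ (4 * β - d) * τ ^ (-1 - α) ≤ K w τ)
    {x : E} (hx : 2 ≤ ‖x‖) {L : ℝ} (hxL : ‖x‖ + 1 ≤ L) {t : ℝ} (ht : 1 ≤ t)
    (hLt : L ≤ (t / 4) ^ (α / (2 * β))) (γ : ℝ) :
    c₁ * 2 ^ (-1 - α) * 2 ^ (-|γ|) * volume.real (Metric.ball (0 : E) 1) * L ^ (2 * β - d) *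
        t ^ (-γ) ≤ ballMildSolution K γ x t := by
  set e := α / (2 * β)
  set V := volume.real (Metric.ball (0 : E) 1)
  have he : 0 < e := by positivity
  have hL : 0 < L := by linarith [norm_nonneg x]
  -- the kernel sees the source ball in its parabolic regime when `t - s ∈ [R, 2R]`
  set R := L ^ e⁻¹
  have hR : 0 < R := rpow_pos_of_pos hL _
  have hRe : R ^ e = L := by rw [← rpow_mul hL.le, inv_mul_cancel₀ he.ne', rpow_one]
  have hRt : R ≤ t / 4 := by
    calc R ≤ ((t / 4) ^ e) ^ e⁻¹ := rpow_le_rpow hL.le hLt (inv_nonneg.2 he.le)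
      _ = t / 4 := by rw [← rpow_mul (by positivity), mul_inv_cancel₀ he.ne', rpow_one]
  have hwindow : Ioc (t - 2 * R) (t - R) ⊆ Ioc 0 t :=
    fun s hs => ⟨by linarith [hs.1], by linarith [hs.2]⟩
  have hvol : volume.real (Ioc (t - 2 * R) (t - R)) = R := by
    rw [Measure.real, Real.volume_Ioc, ENNReal.toReal_ofReal (by linarith)]
    ring
  have hpow : (2 * R) ^ (-1 - α) * R = 2 ^ (-1 - α) * L ^ (-(2 * β)) := by
    rw [mul_rpow zero_le_two hR.le, mul_assoc, ← rpow_add_one hR.ne', ← hRe, ← rpow_mul hR.le,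
      show -1 - α + 1 = e * -(2 * β) by simp only [e]; field_simp; ring]
  have hlower : ∀ s ∈ Ioc (t - 2 * R) (t - R),
      c₁ * L ^ (4 * β - d) * (2 * R) ^ (-1 - α) * V * (2 ^ (-|γ|) * t ^ (-γ)) ≤
        (1 + s) ^ (-γ) * ballPotential K x (t - s) := by
    intro s hs
    have hτ : 0 < t - s := by linarith [hs.2]
    have hLτ : L ≤ (t - s) ^ e := hRe ▸ rpow_le_rpow hR.le (by linarith [hs.2]) he.le
    have hΦ : c₁ * L ^ (4 * β - d) * (2 * R) ^ (-1 - α) * V ≤ ballPotential K x (t - s) :=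
      calc c₁ * L ^ (4 * β - d) * (2 * R) ^ (-1 - α) * V
          ≤ c₁ * L ^ (4 * β - d) * (t - s) ^ (-1 - α) * V := by
            refine mul_le_mul_of_nonneg_right (mul_le_mul_of_nonneg_left ?_ (by positivity))
              measureReal_nonneg
            exact rpow_le_rpow_of_nonpos hτ (by linarith [hs.1]) (by linarith)
        _ ≤ ballPotential K x (t - s) := le_ballPotential hKm hK₀ hKle hd hc₁ hKge hx hxL hτ hLτ
    have hγ := two_rpow_neg_abs_mul_rpow_le (t := t) (r := 1 + s) (by linarith) (by linarith [hs.1])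
      (by linarith [hs.2]) γ
    rw [mul_comm ((1 + s) ^ (-γ))]
    exact mul_le_mul hΦ hγ (by positivity) (hΦ.trans' (by positivity))
  calc c₁ * 2 ^ (-1 - α) * 2 ^ (-|γ|) * V * L ^ (2 * β - d) * t ^ (-γ)
      = c₁ * L ^ (4 * β - d) * (2 * R) ^ (-1 - α) * V * (2 ^ (-|γ|) * t ^ (-γ)) *
          volume.real (Ioc (t - 2 * R) (t - R)) := by
        rw [hvol, show (2 * β - d) = (4 * β - d) + -(2 * β) by ring, rpow_add hL]
        linear_combination (c₁ * L ^ (4 * β - d) * V * (2 ^ (-|γ|) * t ^ (-γ))) * hpow.symm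
    _ ≤ ballMildSolution K γ x t :=
        mul_measureReal_le_setIntegral hwindow measurableSet_Ioc measurableSet_Ioc
          measure_Ioc_lt_top.ne (integrableOn_rpow_mul_ballPotential hα hKm hK₀ hKle hx
            (by linarith) γ)
          (fun s hs => mul_nonneg (rpow_nonneg (by linarith [hs.1]) _)
            (setIntegral_nonneg measurableSet_ball fun y _ => hK₀ _ _ (by linarith [hs.2])))
          hlower

theorem le_ballMildSolution_fundamentalSolution {β d c₁ : ℝ} {G : E → ℝ} (hα : 0 < α)
    (hβ : 0 < β) (hd : 4 * β ≤ d) (hGm : Measurable G) (hG₀ : ∀ ξ, 0 ≤ G ξ) (hc₁ : 0 ≤ c₁)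
    (hc₂ : 0 ≤ c₂)
    (hGin : ∀ ξ : E, 0 < ‖ξ‖ → ‖ξ‖ ≤ 1 →
      c₁ * ‖ξ‖ ^ (4 * β - d) ≤ G ξ ∧ G ξ ≤ c₂ * ‖ξ‖ ^ (4 * β - d))
    (hGout : ∀ ξ : E, 1 ≤ ‖ξ‖ → G ξ ≤ c₂ * ‖ξ‖ ^ (-(d + 2 * β)))
    {ν μ r : ℝ} (hνμ : ν < μ) (hr : 0 < r) (hνr : 2 ≤ ν * r) {x : E} (hx₁ : ν ≤ ‖x‖ / r)
    (hx₂ : ‖x‖ / r ≤ μ) {t : ℝ} (ht : 1 ≤ t) (hrt : 2 * μ * r ≤ (t / 4) ^ (α / (2 * β))) (γ : ℝ) :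
    c₁ * 2 ^ (-1 - α) * 2 ^ (-|γ|) * volume.real (Metric.ball (0 : E) 1) * (2 * μ) ^ (2 * β - d) *
        r ^ (2 * β - d) * t ^ (-γ) ≤ ballMildSolution (fundamentalSolution α β d G) γ x t := by
  rw [le_div_iff₀ hr] at hx₁
  rw [div_le_iff₀ hr] at hx₂
  have hμr : ν * r ≤ μ * r := by nlinarith
  have hμ : 0 < μ := by nlinarith
  have := le_ballMildSolution hα (measurable_fundamentalSolution hGm)
    (fun w _ hτ => fundamentalSolution_nonneg hG₀ w hτ)
    (fun _ _ hw hτ => fundamentalSolution_le hα hβ hd hc₂ (fun ξ h₁ h₂ => (hGin ξ h₁ h₂).2) hGout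
      hw hτ)
    hβ hd hc₁ (fun _ _ hw hτ hwτ => le_fundamentalSolution hβ.ne' (fun ξ h₁ h₂ => (hGin ξ h₁ h₂).1)
      hw hτ hwτ) (by linarith) (by linarith : ‖x‖ + 1 ≤ 2 * μ * r) ht hrt γ
  rwa [mul_rpow (by positivity) hr.le, ← mul_assoc] at this

end Duhamel

theorem intermediate_lower_bound_diffusive
    (N : ℕ) (α β : ℝ)
    (hα : 0 < α ∧ α < 1) (hβ : 0 < β ∧ β ≤ 1) (hN : 4 * β < (N : ℝ))
    (G : EuclideanSpace ℝ (Fin N) → ℝ)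
    (hGmeas : Measurable G) (hGnonneg : ∀ ξ, 0 ≤ G ξ)
    (c₁ c₂ : ℝ) (hc₁ : 0 < c₁) (hc₂ : 0 < c₂)
    (hGin : ∀ ξ : EuclideanSpace ℝ (Fin N), 0 < ‖ξ‖ → ‖ξ‖ ≤ 1 →
      c₁ * ‖ξ‖ ^ (4 * β - (N : ℝ)) ≤ G ξ ∧ G ξ ≤ c₂ * ‖ξ‖ ^ (4 * β - (N : ℝ)))
    (hGout : ∀ ξ : EuclideanSpace ℝ (Fin N), 1 ≤ ‖ξ‖ →
      c₁ * ‖ξ‖ ^ (-((N : ℝ) + 2 * β)) ≤ G ξ ∧ G ξ ≤ c₂ * ‖ξ‖ ^ (-((N : ℝ) + 2 * β)))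
    (Y : EuclideanSpace ℝ (Fin N) → ℝ → ℝ)
    (hY : ∀ x t, Y x t = t ^ (α - 1 - α * (N : ℝ) / (2 * β)) * G ((t ^ (-(α / (2 * β)))) • x))
    (γ : ℝ) (f : EuclideanSpace ℝ (Fin N) → ℝ → ℝ)
    (hf : ∀ x t, f x t =
      (1 + t) ^ (-γ) * Set.indicator (Metric.ball (0 : EuclideanSpace ℝ (Fin N)) 1) (fun _ => (1:ℝ)) x)
    (u : EuclideanSpace ℝ (Fin N) → ℝ → ℝ)
    (hu : ∀ x t, u x t = ∫ s in Set.Ioc (0:ℝ) t, ∫ y, Y (x - y) (t - s) * f y s)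
    (p : ℝ≥0∞) (hp : 1 ≤ p)
    (ν μ : ℝ) (hν : 0 < ν) (hνμ : ν < μ)
    (g : ℝ → ℝ) (hgpos : ∀ t : ℝ, 0 < t → 0 < g t)
    (hginf : Tendsto g atTop atTop)
    (hgo : Tendsto (fun t => g t / t ^ (α / (2 * β))) atTop (nhds 0)) :
    ∃ c : ℝ, 0 < c ∧ ∃ t₀ : ℝ, 2 ≤ t₀ ∧ ∀ t : ℝ, t₀ ≤ t →
      ENNReal.ofReal (c * t ^ (-γ) * g t ^ (2 * β - (N : ℝ) * (1 - 1 / p.toReal))) ≤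
        eLpNorm (fun x => u x t) p (volume.restrict {x : EuclideanSpace ℝ (Fin N) | ν ≤ ‖x‖ / g t ∧ ‖x‖ / g t ≤ μ}) := by
  obtain ⟨hα, -⟩ := hα
  obtain ⟨hβ, -⟩ := hβ
  obtain rfl : Y = fundamentalSolution α β N G := funext₂ hY
  have hu' : ∀ x t, u x t = ballMildSolution (fundamentalSolution α β N G) γ x t := by
    intro x t
    simp only [hu, hf, integral_mul_const_mul_indicator measurableSet_ball]
    rfl
  have : Nontrivial (EuclideanSpace ℝ (Fin N)) := Module.nontrivial_of_finrank_pos (R := ℝ) <| by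
    rw [finrank_euclideanSpace_fin]
    exact_mod_cast (by linarith : (0 : ℝ) < N)
  set A := {x : EuclideanSpace ℝ (Fin N) | ν ≤ ‖x‖ ∧ ‖x‖ ≤ μ}
  set V := volume.real (Metric.ball (0 : EuclideanSpace ℝ (Fin N)) 1)
  have hV : 0 < V :=
    ENNReal.toReal_pos (Metric.measure_ball_pos _ _ one_pos).ne' measure_ball_lt_top.ne
  have hA : 0 < volume.real A := measureReal_setOf_norm_mem_pos hν.le hνμ
  have hμ : 0 < μ := hν.trans hνμ
  set C := c₁ * 2 ^ (-1 - α) * 2 ^ (-|γ|) * V * (2 * μ) ^ (2 * β - N)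
  have hlarge : ∀ᶠ t in atTop, 2 ≤ t ∧ 2 / ν ≤ g t ∧ 2 * μ * g t ≤ (t / 4) ^ (α / (2 * β)) :=
    (eventually_ge_atTop 2).and <| (hginf.eventually_ge_atTop _).and <|
      eventually_mul_le_div_four_rpow hgo (by positivity)
  obtain ⟨T, hT⟩ := eventually_atTop.1 hlarge
  refine ⟨C * volume.real A ^ (1 / p.toReal), by positivity, max T 2, le_max_right _ _,
    fun t ht => ?_⟩
  obtain ⟨ht, hνg, hgt⟩ := hT t (le_of_max_le_left ht)
  have hg : 0 < g t := hgpos t (by linarith)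
  convert ofReal_le_eLpNorm_restrict_setOf_norm_div_mem hν.le hνμ hg (zero_lt_one.trans_le hp).ne'
    (a := C * g t ^ (2 * β - N) * t ^ (-γ)) (by positivity) (fun x hx₁ hx₂ => hu' x t ▸
      le_ballMildSolution_fundamentalSolution hα hβ hN.le hGmeas hGnonneg hc₁.le hc₂.le hGin
        (fun ξ h => (hGout ξ h).2) hνμ hg ((div_le_iff₀' hν).1 hνg) hx₁ hx₂ (by linarith) hgt γ)
    using 2
  rw [finrank_euclideanSpace_fin,
    show 2 * β - N * (1 - 1 / p.toReal) = (2 * β - N) + N * (1 / p.toReal) by ring, rpow_add hg]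
  ring
end
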